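/- arXiv:2601.05195 — 6 statements merged into one kernel-verified Lean document; each statement's English description precedes it below -/
import Mathlib

section
/- Let G be a finite graph with two subgraphs G_X, G_Y such that G = G_X ∪ G_Y and G_X ∩ G_Y is connected. If B_X and B_Y are generating sets of the cycle spaces of G_X and G_Y respectively, then B_X ∪ B_Y generates the cycle space of G. Consequently bn(G) ≤ bn(G_X) + bn(G_Y). -/
variable {V : Type*} [Fintype V] [DecidableEq V]

/-- An F2-cycle relative to an edge set `E`: a finite set of edges, all belonging to `E`,
in which every vertex has even degree. -/
def IsF2CycleIn (E : Set (Sym2 V)) (C : Finset (Sym2 V)) : Prop :=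
  (∀ e ∈ C, e ∈ E) ∧ ∀ v : V, Even ((C.filter (fun e => v ∈ e)).card)

/-- `B` generates the cycle space of the graph with edge set `E`: every F2-cycle is a
symmetric difference of a subfamily of `B`. -/
def GeneratesIn (E : Set (Sym2 V)) (B : List (Finset (Sym2 V))) : Prop :=
  ∀ C : Finset (Sym2 V), IsF2CycleIn E C →
    ∃ l : List (Finset (Sym2 V)), l.Sublist B ∧ C = l.foldr symmDiff ∅

/-- The basis number of the graph with edge set `E`: the least `k` such that some
family of F2-cycles generating the cycle space uses each edge at most `k` times. -/
noncomputable def bnSet (E : Set (Sym2 V)) : ℕ :=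
  sInf {k | ∃ B : List (Finset (Sym2 V)), (∀ X ∈ B, IsF2CycleIn E X) ∧
    GeneratesIn E B ∧ ∀ e : Sym2 V, B.countP (fun X => decide (e ∈ X)) ≤ k}

/-- The basis number of a graph. -/
noncomputable def SimpleGraph.bn (G : SimpleGraph V) : ℕ := bnSet G.edgeSet

/-!
Split an F2-cycle `C` of `G` into its edges `C_X` lying in `G_X` and the rest `C_Y ⊆ G_Y`.
As `C` has only even degrees, `C_X` and `C_Y` have the same set `T` of odd-degree vertices;
it lies in `G_X ∩ G_Y` and has even size by the handshake lemma. Joining the vertices of `T`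
in pairs by paths of the connected graph `G_X ∩ G_Y` gives an edge set `J` there whose
odd-degree vertices are exactly `T`, so `C = (C_X ∆ J) ∆ (C_Y ∆ J)` with `C_X ∆ J` a cycle
of `G_X` and `C_Y ∆ J` a cycle of `G_Y`. Concatenating optimal generating families of `G_X` and
`G_Y` then bounds the basis number.
-/

open Finset SimpleGraph
open scoped symmDiff

theorem Finset.even_card_symmDiff_iff {α : Type*} [DecidableEq α] (s t : Finset α) :
    Even #(s ∆ t) ↔ (Even #s ↔ Even #t) := by
  have hcard : #(s ∆ t) + 2 * #(s ∩ t) = #s + #t := by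
    rw [symmDiff_eq_sup_sdiff_inf, sup_eq_union, inf_eq_inter,
      card_sdiff_of_subset (inter_subset_union), ← card_union_add_card_inter]
    have := card_le_card (inter_subset_union : s ∩ t ⊆ s ∪ t)
    omega
  rw [← Nat.even_add, ← hcard, Nat.even_add]
  simp

theorem Finset.coe_symmDiff_subset {α : Type*} [DecidableEq α] {s t : Finset α} {E : Set α}
    (hs : ↑s ⊆ E) (ht : ↑t ⊆ E) : ↑(s ∆ t) ⊆ E := by
  rw [coe_symmDiff]
  exact symmDiff_le (hs.trans le_sup_right) (ht.trans le_sup_right)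

def oddDegreeVerts (C : Finset (Sym2 V)) : Finset V :=
  {v | Odd #(C.filter (fun e => v ∈ e))}

@[simp]
theorem mem_oddDegreeVerts {C : Finset (Sym2 V)} {v : V} :
    v ∈ oddDegreeVerts C ↔ Odd #(C.filter (fun e => v ∈ e)) := by
  simp [oddDegreeVerts]

theorem oddDegreeVerts_symmDiff (C D : Finset (Sym2 V)) :
    oddDegreeVerts (C ∆ D) = oddDegreeVerts C ∆ oddDegreeVerts D := by
  ext v
  have hfilter : (C ∆ D).filter (fun e => v ∈ e) =
      C.filter (fun e => v ∈ e) ∆ D.filter (fun e => v ∈ e) := by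
    ext e; simp only [mem_filter, mem_symmDiff]; tauto
  simp only [mem_oddDegreeVerts, mem_symmDiff, hfilter, ← Nat.not_even_iff_odd,
    even_card_symmDiff_iff]
  tauto

theorem isF2CycleIn_iff {E : Set (Sym2 V)} {C : Finset (Sym2 V)} :
    IsF2CycleIn E C ↔ ↑C ⊆ E ∧ oddDegreeVerts C = ∅ := by
  simp [IsF2CycleIn, eq_empty_iff_forall_notMem, Set.subset_def]

theorem IsF2CycleIn.mono {α : Type*} [DecidableEq α] {E E' : Set (Sym2 α)}
    {C : Finset (Sym2 α)} (hC : IsF2CycleIn E C) (h : E ⊆ E') : IsF2CycleIn E' C :=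
  ⟨fun e he => h (hC.1 e he), hC.2⟩

theorem even_card_oddDegreeVerts {C : Finset (Sym2 V)} (hC : ∀ e ∈ C, ¬e.IsDiag) :
    Even #(oddDegreeVerts C) := by
  have hsum : ∑ v, #(C.filter (fun e => v ∈ e)) = 2 * #C := by
    have hdouble := sum_card_bipartiteAbove_eq_sum_card_bipartiteBelow
      (s := univ) (t := C) (r := fun v e => v ∈ e)
    simp only [bipartiteAbove, bipartiteBelow] at hdouble
    rw [hdouble, card_eq_sum_ones, mul_sum, mul_one]
    refine sum_congr rfl fun e he => ?_
    rw [← Sym2.card_toFinset_of_not_isDiag e (hC e he)]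
    congr 1; ext v; simp
  rw [oddDegreeVerts, ← even_sum_iff_even_card_odd, hsum]
  exact even_two_mul _

theorem SimpleGraph.Subgraph.mem_verts_of_mem_oddDegreeVerts {G : SimpleGraph V}
    {H : G.Subgraph} {C : Finset (Sym2 V)} (hC : ↑C ⊆ H.edgeSet) {v : V}
    (hv : v ∈ oddDegreeVerts C) : v ∈ H.verts := by
  obtain ⟨e, he⟩ := card_pos.1 (mem_oddDegreeVerts.1 hv).pos
  rw [mem_filter] at he
  exact H.mem_verts_of_mem_edge (hC he.1) he.2

theorem SimpleGraph.Walk.IsTrail.oddDegreeVerts_edges {G : SimpleGraph V} {u v : V}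
    {p : G.Walk u v} (hp : p.IsTrail) : oddDegreeVerts p.edges.toFinset = {u} ∆ {v} := by
  ext x
  have hcount : #(p.edges.toFinset.filter (fun e => x ∈ e)) = p.edges.countP (x ∈ ·) := by
    have hfilter : p.edges.toFinset.filter (fun e => x ∈ e) =
        (p.edges.filter (fun e => x ∈ e)).toFinset := by
      ext; simp
    rw [hfilter, List.card_toFinset, (hp.edges_nodup.filter _).dedup,
      List.countP_eq_length_filter]
  rw [mem_oddDegreeVerts, hcount, ← Nat.not_even_iff_odd, hp.even_countP_edges_iff,
    mem_symmDiff, mem_singleton, mem_singleton]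
  grind

theorem SimpleGraph.Subgraph.Connected.exists_oddDegreeVerts_eq_pair {G : SimpleGraph V}
    {H : G.Subgraph} (hH : H.Connected) {u v : V} (hu : u ∈ H.verts) (hv : v ∈ H.verts) :
    ∃ J : Finset (Sym2 V), ↑J ⊆ H.edgeSet ∧ oddDegreeVerts J = {u} ∆ {v} := by
  obtain ⟨p, hp⟩ := (Subgraph.connected_iff_forall_exists_walk_subgraph H).1 hH |>.2 hu hv
  refine ⟨p.bypass.edges.toFinset, fun e he => ?_, p.bypass_isPath.isTrail.oddDegreeVerts_edges⟩
  have he' : e ∈ p.edges := p.edges_bypass_subset_edges (List.mem_toFinset.1 he)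
  exact Subgraph.edgeSet_mono hp (p.mem_edges_toSubgraph.2 he')

theorem SimpleGraph.Subgraph.Connected.exists_oddDegreeVerts_eq {G : SimpleGraph V}
    {H : G.Subgraph} (hH : H.Connected) (T : Finset V) (hT : ↑T ⊆ H.verts) (hTeven : Even #T) :
    ∃ J : Finset (Sym2 V), ↑J ⊆ H.edgeSet ∧ oddDegreeVerts J = T := by
  induction T using Finset.strongInduction with
  | H T ih =>
  obtain rfl | ⟨u, hu⟩ := T.eq_empty_or_nonempty
  · exact ⟨∅, by simp, by ext; simp⟩
  have hcard := card_erase_add_one hu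
  obtain ⟨v, hv⟩ : (T.erase u).Nonempty := by
    rw [← card_pos]
    by_contra h
    rw [show #(T.erase u) = 0 by omega] at hcard
    simp [← hcard] at hTeven
  set T' := (T.erase u).erase v
  have hT'sub : T' ⊂ T := (erase_ssubset hv).trans (erase_ssubset hu)
  have hT'even : Even #T' := by
    rw [← hcard, ← card_erase_add_one hv] at hTeven
    simpa [Nat.even_add_one] using hTeven
  obtain ⟨J', hJ'H, hJ'⟩ := ih T' hT'sub ((coe_subset.2 hT'sub.subset).trans hT) hT'even
  obtain ⟨P, hPH, hP⟩ := hH.exists_oddDegreeVerts_eq_pair (hT hu) (hT (mem_of_mem_erase hv))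
  refine ⟨J' ∆ P, ?_, ?_⟩
  · exact coe_symmDiff_subset hJ'H hPH
  · rw [oddDegreeVerts_symmDiff, hJ', hP]
    ext x
    simp only [T', mem_symmDiff, mem_erase, mem_singleton]
    grind

theorem exists_symmDiff_eq_of_isF2CycleIn_sup {G : SimpleGraph V} {GX GY : G.Subgraph}
    (hconn : (GX ⊓ GY).Connected) {C : Finset (Sym2 V)}
    (hC : IsF2CycleIn (GX ⊔ GY).edgeSet C) :
    ∃ CX CY, IsF2CycleIn GX.edgeSet CX ∧ IsF2CycleIn GY.edgeSet CY ∧ C = CX ∆ CY := by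
  classical
  rw [isF2CycleIn_iff, Subgraph.edgeSet_sup] at hC
  obtain ⟨hCE, hCodd⟩ := hC
  set CX := C.filter (· ∈ GX.edgeSet)
  set CY := C.filter (· ∉ GX.edgeSet)
  have hCX : ↑CX ⊆ GX.edgeSet := fun e he => (mem_filter.1 he).2
  have hCY : ↑CY ⊆ GY.edgeSet := fun e he =>
    (hCE (mem_filter.1 he).1).resolve_left (mem_filter.1 he).2
  have hsplit : C = CX ∆ CY := by
    ext e; simp only [CX, CY, mem_symmDiff, mem_filter]; tauto
  have hodd : oddDegreeVerts CX = oddDegreeVerts CY := by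
    rw [← symmDiff_eq_empty, ← oddDegreeVerts_symmDiff, ← hsplit, hCodd]
  have hoddInter : ↑(oddDegreeVerts CX) ⊆ (GX ⊓ GY).verts := fun v hv =>
    ⟨Subgraph.mem_verts_of_mem_oddDegreeVerts hCX hv,
      Subgraph.mem_verts_of_mem_oddDegreeVerts hCY (hodd ▸ hv)⟩
  have hevenOdd : Even #(oddDegreeVerts CX) := even_card_oddDegreeVerts fun e he =>
    G.not_isDiag_of_mem_edgeSet (GX.edgeSet_subset (hCX he))
  obtain ⟨J, hJ, hJodd⟩ := hconn.exists_oddDegreeVerts_eq _ hoddInter hevenOdd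
  rw [Subgraph.edgeSet_inf] at hJ
  refine ⟨CX ∆ J, CY ∆ J, ?_, ?_, ?_⟩
  · rw [isF2CycleIn_iff, oddDegreeVerts_symmDiff, hJodd, symmDiff_self]
    exact ⟨coe_symmDiff_subset hCX (hJ.trans Set.inter_subset_left), rfl⟩
  · rw [isF2CycleIn_iff, oddDegreeVerts_symmDiff, hJodd, hodd, symmDiff_self]
    exact ⟨coe_symmDiff_subset hCY (hJ.trans Set.inter_subset_right), rfl⟩
  · rw [symmDiff_symmDiff_symmDiff_comm, symmDiff_self, symmDiff_bot, hsplit]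

theorem foldr_symmDiff_append {α : Type*} [DecidableEq α] (l₁ l₂ : List (Finset α)) :
    (l₁ ++ l₂).foldr symmDiff ∅ = l₁.foldr symmDiff ∅ ∆ l₂.foldr symmDiff ∅ := by
  induction l₁ with
  | nil => exact (bot_symmDiff _).symm
  | cons s l ih => simp [ih, symmDiff_assoc]

theorem generatesIn_append {α : Type*} [DecidableEq α] {E EX EY : Set (Sym2 α)}
    {BX BY : List (Finset (Sym2 α))}
    (hsplit : ∀ C, IsF2CycleIn E C →
      ∃ CX CY, IsF2CycleIn EX CX ∧ IsF2CycleIn EY CY ∧ C = CX ∆ CY)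
    (hBX : GeneratesIn EX BX) (hBY : GeneratesIn EY BY) : GeneratesIn E (BX ++ BY) := by
  intro C hC
  obtain ⟨CX, CY, hCX, hCY, rfl⟩ := hsplit C hC
  obtain ⟨lX, hlX, rfl⟩ := hBX CX hCX
  obtain ⟨lY, hlY, rfl⟩ := hBY CY hCY
  exact ⟨lX ++ lY, hlX.append hlY, (foldr_symmDiff_append lX lY).symm⟩

theorem exists_generatesIn_countP_le_bnSet (E : Set (Sym2 V)) :
    ∃ B : List (Finset (Sym2 V)), (∀ X ∈ B, IsF2CycleIn E X) ∧ GeneratesIn E B ∧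
      ∀ e : Sym2 V, B.countP (fun X => decide (e ∈ X)) ≤ bnSet E := by
  classical
  let cycles := (univ.filter (IsF2CycleIn E)).toList
  have hne : {k | ∃ B : List (Finset (Sym2 V)), (∀ X ∈ B, IsF2CycleIn E X) ∧
      GeneratesIn E B ∧ ∀ e : Sym2 V, B.countP (fun X => decide (e ∈ X)) ≤ k}.Nonempty := by
    refine ⟨cycles.length, cycles, fun X hX => ?_, fun C hC => ⟨[C], ?_, ?_⟩,
      fun _ => List.countP_le_length⟩
    · simpa [cycles] using hX
    · simpa [cycles] using hC
    · exact (symmDiff_bot C).symm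
  exact Nat.sInf_mem hne

/-- if `G = G_X ∪ G_Y` with `G_X ∩ G_Y` connected, generating sets of the
cycle spaces of `G_X` and `G_Y` together generate the cycle space of `G`; consequently
`bn(G) ≤ bn(G_X) + bn(G_Y)`. -/
theorem generates_union_of_connected_inter (G : SimpleGraph V) (GX GY : G.Subgraph)
    (hunion : GX ⊔ GY = ⊤) (hconn : (GX ⊓ GY).Connected)
    (BX BY : List (Finset (Sym2 V)))
    (hBX : GeneratesIn GX.edgeSet BX) (hBY : GeneratesIn GY.edgeSet BY) :
    GeneratesIn G.edgeSet (BX ++ BY) ∧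
      G.bn ≤ bnSet GX.edgeSet + bnSet GY.edgeSet := by
  have hsplit : ∀ C, IsF2CycleIn G.edgeSet C →
      ∃ CX CY, IsF2CycleIn GX.edgeSet CX ∧ IsF2CycleIn GY.edgeSet CY ∧ C = CX ∆ CY := by
    rw [← Subgraph.edgeSet_top, ← hunion]
    exact fun C hC => exists_symmDiff_eq_of_isF2CycleIn_sup hconn hC
  refine ⟨generatesIn_append hsplit hBX hBY, ?_⟩
  obtain ⟨BX', hBX'cycles, hBX'gen, hBX'cong⟩ := exists_generatesIn_countP_le_bnSet GX.edgeSet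
  obtain ⟨BY', hBY'cycles, hBY'gen, hBY'cong⟩ := exists_generatesIn_countP_le_bnSet GY.edgeSet
  refine Nat.sInf_le ⟨BX' ++ BY', ?_, generatesIn_append hsplit hBX'gen hBY'gen, fun e => ?_⟩
  · simp only [List.mem_append]
    rintro X (hX | hX)
    exacts [(hBX'cycles X hX).mono GX.edgeSet_subset, (hBY'cycles X hX).mono GY.edgeSet_subset]
  · rw [List.countP_append]
    exact add_le_add (hBX'cong e) (hBY'cong e)
end

section
/- For any finite graph G and any vertex v of G, bn(G) ≤ bn(G - v) + 2, where G - v is the graph obtained by deleting v and its incident edges. -/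
variable {V : Type*} [Fintype V] [DecidableEq V]

/-!
Let `H` be the edges of `G` away from `v` and `N` the neighbours of `v`. It suffices to find
cycles of `G`, using every edge at most twice, whose span contains for each cycle `C` of `G` a
set with the same edges at `v` as `C`: the symmetric difference is then a cycle of `G - v`, so
these cycles together with an optimal family for `G - v` generate the cycle space of `G`.

Such cycles are found by induction on `H`, allowing `N` to be any set of vertices. An edge on a
cycle `Z` of `H` can be deleted, adding `Z` to the cycles that use it. If `H` is a forest with
a leaf `ℓ` on the edge `ℓp`, then `ℓp` lies on no cycle when `ℓ ∉ N`, and when `ℓ ∈ N` the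
path `v ℓ p` is replaced by an edge `vp`, the triangle `v ℓ p` translating cycles between the
two graphs.
-/

open scoped symmDiff

section F2

variable {α : Type*} [DecidableEq α]

@[simp]
theorem Finset.empty_symmDiff (s : Finset α) : ∅ ∆ s = s := symmDiff_eq_right.2 rfl

@[simp]
theorem Finset.symmDiff_empty (s : Finset α) : s ∆ ∅ = s := symmDiff_eq_left.2 rfl

theorem even_card_symmDiff {s t : Finset α} (hs : Even s.card) (ht : Even t.card) :
    Even (s ∆ t).card := by
  have h := Finset.card_union_add_card_inter s t
  rw [← Finset.sup_eq_union, ← symmDiff_sup_inf s t, Finset.sup_eq_union,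
    Finset.card_union_of_disjoint (disjoint_symmDiff_inf s t), Finset.inf_eq_inter] at h
  rw [Nat.even_iff] at *
  omega

theorem Finset.filter_symmDiff (p : α → Prop) [DecidablePred p] (s t : Finset α) :
    (s ∆ t).filter p = s.filter p ∆ t.filter p := by
  ext a
  simp only [mem_filter, mem_symmDiff]
  tauto

theorem mem_foldr_symmDiff_iff {l : List (Finset α)} {a : α} :
    a ∈ l.foldr symmDiff ∅ ↔ Odd (l.countP (a ∈ ·)) := by
  induction l with
  | nil => simp
  | cons X l ih =>
    by_cases h : a ∈ X <;> simp [Finset.mem_symmDiff, ih, h, Nat.odd_add_one]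

theorem foldr_symmDiff_map_image {β : Type*} [DecidableEq β] {f : α → β}
    (hf : Function.Injective f) (l : List (Finset α)) :
    (l.map (Finset.image f)).foldr symmDiff ∅ = (l.foldr symmDiff ∅).image f := by
  induction l with
  | nil => simp
  | cons X l ih => simp [ih, Finset.image_symmDiff _ _ hf]

theorem foldr_symmDiff_map_ite (p : Finset α → Prop) [DecidablePred p] (Y : Finset α)
    (l : List (Finset α)) :
    (l.map fun X => if p X then X ∆ Y else X).foldr symmDiff ∅ =
      l.foldr symmDiff ∅ ∆ if Odd (l.countP (p ·)) then Y else ∅ := by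
  induction l with
  | nil => simp
  | cons X l ih =>
    simp only [List.map_cons, List.foldr_cons, ih, List.countP_cons, decide_eq_true_eq]
    by_cases hX : p X <;> by_cases hl : Odd (l.countP (p ·)) <;>
      simp [hX, hl, Nat.odd_add_one, symmDiff_assoc, symmDiff_left_comm Y, symmDiff_comm Y]

theorem filter_symmDiff_eq_of_filter_eq {p : α → Prop} [DecidablePred p]
    {S C T : Finset α} (h : S.filter p = (C ∆ T).filter p) :
    (S ∆ T).filter p = C.filter p := by
  rw [Finset.filter_symmDiff, h, Finset.filter_symmDiff, symmDiff_symmDiff_cancel_right]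

def f2Span (D : List (Finset α)) : Set (Finset α) :=
  {S | ∃ l : List (Finset α), l.Sublist D ∧ S = l.foldr symmDiff ∅}

theorem empty_mem_f2Span (D : List (Finset α)) : ∅ ∈ f2Span D :=
  ⟨[], List.nil_sublist D, rfl⟩

theorem mem_f2Span_of_mem {D : List (Finset α)} {X : Finset α} (h : X ∈ D) : X ∈ f2Span D :=
  ⟨[X], List.singleton_sublist.2 h, by simp⟩

theorem f2Span_mono {D D' : List (Finset α)} (h : D.Sublist D') : f2Span D ⊆ f2Span D' :=
  fun _ ⟨l, hl, hS⟩ => ⟨l, hl.trans h, hS⟩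

theorem symmDiff_mem_f2Span {D : List (Finset α)} {S T : Finset α} (hS : S ∈ f2Span D)
    (hT : T ∈ f2Span D) : S ∆ T ∈ f2Span D := by
  induction D generalizing S T with
  | nil =>
    obtain ⟨_, hl, rfl⟩ := hS
    obtain ⟨_, hl', rfl⟩ := hT
    simp [List.sublist_nil.1 hl, List.sublist_nil.1 hl', empty_mem_f2Span]
  | cons X D ih =>
    obtain ⟨l₁, hl₁, rfl⟩ := hS
    obtain ⟨l₂, hl₂, rfl⟩ := hT
    rcases List.sublist_cons_iff.1 hl₁ with h₁ | ⟨r₁, rfl, h₁⟩ <;>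
    rcases List.sublist_cons_iff.1 hl₂ with h₂ | ⟨r₂, rfl, h₂⟩ <;>
    obtain ⟨l, hl, he⟩ := ih ⟨_, h₁, rfl⟩ ⟨_, h₂, rfl⟩
    · exact ⟨l, hl.cons X, he⟩
    · exact ⟨X :: l, hl.cons_cons X, by simp [he, symmDiff_left_comm]⟩
    · exact ⟨X :: l, hl.cons_cons X, by simp [he, symmDiff_assoc]⟩
    · exact ⟨l, hl.cons X, by simp [he, symmDiff_symmDiff_symmDiff_comm X]⟩

theorem foldr_symmDiff_mem {s : Set (Finset α)} (h₀ : ∅ ∈ s)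
    (hs : ∀ S ∈ s, ∀ T ∈ s, S ∆ T ∈ s) {l : List (Finset α)} (hl : ∀ X ∈ l, X ∈ s) :
    l.foldr symmDiff ∅ ∈ s := by
  induction l with
  | nil => exact h₀
  | cons X l ih => exact hs X (hl X (by simp)) _ (ih fun Y hY => hl Y (by simp [hY]))

theorem f2Span_subset {D : List (Finset α)} {s : Set (Finset α)} (h₀ : ∅ ∈ s)
    (hs : ∀ S ∈ s, ∀ T ∈ s, S ∆ T ∈ s) (hD : ∀ X ∈ D, X ∈ s) : f2Span D ⊆ s := by
  rintro _ ⟨l, hl, rfl⟩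
  exact foldr_symmDiff_mem h₀ hs fun X hX => hD X (hl.subset hX)

theorem f2Span_subset_f2Span {D D' : List (Finset α)} (h : ∀ X ∈ D, X ∈ f2Span D') :
    f2Span D ⊆ f2Span D' :=
  f2Span_subset (empty_mem_f2Span D') (fun _ hS _ hT => symmDiff_mem_f2Span hS hT) h

end F2

section Cycles

variable {W : Type*} [DecidableEq W] {E F : Set (Sym2 W)} {C X Y : Finset (Sym2 W)}

theorem isF2CycleIn_empty (E : Set (Sym2 W)) : IsF2CycleIn E ∅ :=
  ⟨by simp, fun _ => by simp⟩

theorem IsF2CycleIn.mono_s3 (h : E ⊆ F) (hC : IsF2CycleIn E C) : IsF2CycleIn F C :=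
  ⟨fun e he => h (hC.1 e he), hC.2⟩

theorem IsF2CycleIn.symmDiff (hX : IsF2CycleIn E X) (hY : IsF2CycleIn E Y) :
    IsF2CycleIn E (X ∆ Y) := by
  refine ⟨fun e he => ?_, fun w => ?_⟩
  · rcases Finset.mem_union.1 (Finset.symmDiff_subset_union he) with he | he
    exacts [hX.1 e he, hY.1 e he]
  · rw [Finset.filter_symmDiff]
    exact even_card_symmDiff (hX.2 w) (hY.2 w)

theorem IsF2CycleIn.symmDiff_ite (hC : IsF2CycleIn E C) (hY : IsF2CycleIn E Y) (b : Prop)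
    [Decidable b] : IsF2CycleIn E (C ∆ if b then Y else ∅) := by
  split_ifs
  exacts [hC.symmDiff hY, by simpa using hC]

theorem isF2CycleIn_of_mem_f2Span {D : List (Finset (Sym2 W))} (hD : ∀ X ∈ D, IsF2CycleIn E X)
    {S : Finset (Sym2 W)} (hS : S ∈ f2Span D) : IsF2CycleIn E S :=
  f2Span_subset (s := {C | IsF2CycleIn E C}) (isF2CycleIn_empty E)
    (fun _ hS _ hT => IsF2CycleIn.symmDiff hS hT) hD hS

theorem IsF2CycleIn.notMem_of_forall_eq (hC : IsF2CycleIn E C) {x : W} {f : Sym2 W}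
    (hf : x ∈ f) (hx : ∀ e ∈ E, x ∈ e → e = f) : f ∉ C := by
  intro hfC
  have : C.filter (x ∈ ·) = {f} := by
    ext e
    simp only [Finset.mem_filter, Finset.mem_singleton]
    exact ⟨fun ⟨he, hxe⟩ => hx e (hC.1 e he) hxe, by rintro rfl; exact ⟨hfC, hf⟩⟩
  simpa [this] using hC.2 x

theorem IsF2CycleIn.mem_iff_mem_of_forall_eq_or_eq (hC : IsF2CycleIn E C) {x : W}
    {b f : Sym2 W} (hb : x ∈ b) (hf : x ∈ f) (hbf : b ≠ f)
    (hx : ∀ e ∈ E, x ∈ e → e = b ∨ e = f) : b ∈ C ↔ f ∈ C := by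
  have : C.filter (x ∈ ·) = ({b, f} : Finset (Sym2 W)).filter (· ∈ C) := by
    ext e
    simp only [Finset.mem_filter, Finset.mem_insert, Finset.mem_singleton]
    constructor
    · exact fun ⟨he, hxe⟩ => ⟨hx e (hC.1 e he) hxe, he⟩
    · rintro ⟨rfl | rfl, he⟩ <;> tauto
  have h := hC.2 x
  rw [this] at h
  by_cases hbC : b ∈ C <;> by_cases hfC : f ∈ C <;>
    simp [Finset.filter_insert, Finset.filter_singleton, hbC, hfC, hbf] at h ⊢

theorem even_card_filter_mem_triangle {x y z : W} (hxy : x ≠ y) (hxz : x ≠ z) (hyz : y ≠ z)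
    (w : W) : Even (({s(x, y), s(x, z), s(y, z)} : Finset (Sym2 W)).filter (w ∈ ·)).card := by
  by_cases hx : w = x
  · subst hx; simp [Finset.filter_insert, Finset.filter_singleton, hxy, hxz, hyz]
  by_cases hy : w = y
  · subst hy; simp [Finset.filter_insert, Finset.filter_singleton, hxy.symm, hxz, hyz]
  by_cases hz : w = z
  · subst hz; simp [Finset.filter_insert, Finset.filter_singleton, hxy, hxz.symm, hyz.symm]
  simp [Finset.filter_insert, Finset.filter_singleton, hx, hy, hz]

theorem IsF2CycleIn.erase {H : Finset (Sym2 W)} {S : Set (Sym2 W)}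
    (hC : IsF2CycleIn (↑H ∪ S) C) {f : Sym2 W} (hf : f ∉ C) :
    IsF2CycleIn (↑(H.erase f) ∪ S) C := by
  refine ⟨fun e he => ?_, hC.2⟩
  rcases hC.1 e he with h | h
  exacts [Or.inl (Finset.mem_erase.2 ⟨ne_of_mem_of_not_mem he hf, h⟩), Or.inr h]

theorem IsF2CycleIn.of_insert {a : Sym2 W}
    (hC : IsF2CycleIn (insert a E) C) (ha : a ∉ C) : IsF2CycleIn E C :=
  ⟨fun e he => Set.mem_of_mem_insert_of_ne (hC.1 e he) (ne_of_mem_of_not_mem he ha), hC.2⟩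

end Cycles

section Leaf

variable {W : Type*} [DecidableEq W]

open SimpleGraph in
theorem exists_leaf_or_isF2CycleIn {H : Finset (Sym2 W)} (hH : H.Nonempty)
    (hdiag : ∀ e ∈ H, ¬e.IsDiag) :
    (∃ ℓ p, s(ℓ, p) ∈ H ∧ ∀ e ∈ H, ℓ ∈ e → e = s(ℓ, p)) ∨
      ∃ Z : Finset (Sym2 W), Z.Nonempty ∧ IsF2CycleIn H Z := by
  set G := fromEdgeSet (H : Set (Sym2 W))
  have hadj : ∀ {a b}, G.Adj a b ↔ s(a, b) ∈ H ∧ a ≠ b := by simp [G]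
  by_cases hG : G.IsAcyclic
  · left
    obtain ⟨e, he⟩ := hH
    induction e using Sym2.ind with | _ a b => ?_
    have hab : G.Adj a b := hadj.2 ⟨he, fun h => hdiag _ he (by simp [h])⟩
    have : Nonempty W := ⟨a⟩
    have : Finite G.edgeSet :=
      (H.finite_toSet.subset (show G.edgeSet ⊆ H by simp [G])).to_subtype
    -- In a forest, the first vertex of a longest path is a leaf.
    obtain ⟨u, w, p, hp, hmax⟩ := Walk.exists_isPath_forall_isPath_length_le_length G
    have hnil : ¬p.Nil := by
      have := hmax a b (hab.toWalk) (by simp [hab.ne])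
      rw [Walk.not_nil_iff_lt_length]
      simpa [Nat.one_le_iff_ne_zero, Nat.pos_iff_ne_zero] using this
    refine ⟨u, p.snd, (hadj.1 (p.adj_snd hnil)).1, fun e he hue => ?_⟩
    obtain ⟨x, rfl⟩ : ∃ x, e = s(u, x) := ⟨Sym2.Mem.other hue, (Sym2.other_spec hue).symm⟩
    have hux : G.Adj u x := hadj.2 ⟨he, fun h => hdiag _ he (by simp [h])⟩
    have hx : x ∈ p.support := by
      by_contra hx
      simpa using hmax _ _ (p.cons hux.symm) (hp.cons hx)
    rw [hG.eq_snd_of_adj_start hp hux hx]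
  · right
    obtain ⟨u, c, hc⟩ : ∃ u, ∃ c : G.Walk u u, c.IsCycle := by simpa [IsAcyclic] using hG
    refine ⟨c.edges.toFinset, ?_, fun e he => ?_, fun x => ?_⟩
    · simpa [List.toFinset_nonempty_iff, Walk.eq_nil_iff_nil] using hc.not_nil
    · have := c.edges_subset_edgeSet (List.mem_toFinset.1 he)
      simp only [G, edgeSet_fromEdgeSet] at this
      exact this.1
    · rw [List.filter_toFinset, List.toFinset_card_of_nodup (hc.edges_nodup.filter _),
        ← List.countP_eq_length_filter]
      simpa using hc.isTrail.even_countP_edges_iff x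

end Leaf

section Star

variable {W : Type*} {v : W}

variable (v) in
def starEdges (N : Finset W) : Set (Sym2 W) :=
  (fun u => s(v, u)) '' N

theorem mem_starEdges {N : Finset W} {e : Sym2 W} : e ∈ starEdges v N ↔ ∃ u ∈ N, s(v, u) = e :=
  Iff.rfl

theorem eq_of_mem_starEdges {N : Finset W} {e : Sym2 W} {u : W} (he : e ∈ starEdges v N)
    (hu : u ∈ e) (huv : u ≠ v) : e = s(v, u) ∧ u ∈ N := by
  obtain ⟨w, hw, rfl⟩ := he
  obtain rfl | rfl := Sym2.mem_iff.1 hu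
  exacts [absurd rfl huv, ⟨rfl, hw⟩]

end Star

section StarGenerating

variable {W : Type*} [DecidableEq W] {v : W}

variable (v) in
structure IsStarGenerating (E : Set (Sym2 W)) (D : List (Finset (Sym2 W))) : Prop where
  isF2CycleIn : ∀ X ∈ D, IsF2CycleIn E X
  countP_le_two : ∀ e, D.countP (e ∈ ·) ≤ 2
  exists_mem_f2Span :
    ∀ C, IsF2CycleIn E C → ∃ S ∈ f2Span D, S.filter (v ∈ ·) = C.filter (v ∈ ·)

theorem isStarGenerating_nil {N : Finset W} (hN : v ∉ N) :
    IsStarGenerating v (starEdges v N) [] where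
  isF2CycleIn := by simp
  countP_le_two := by simp
  exists_mem_f2Span C hC := by
    refine ⟨∅, empty_mem_f2Span _, ?_⟩
    suffices C = ∅ by simp [this]
    refine Finset.eq_empty_of_forall_notMem fun e he => ?_
    obtain ⟨u, hu, rfl⟩ := hC.1 e he
    have huv : u ≠ v := ne_of_mem_of_not_mem hu hN
    exact hC.notMem_of_forall_eq (Sym2.mem_mk_right v u)
      (fun e' he' hue' => (eq_of_mem_starEdges he' hue' huv).1) he

theorem IsStarGenerating.of_reduction {E E' : Set (Sym2 W)} {D : List (Finset (Sym2 W))}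
    (hD : IsStarGenerating v E' D) (hE : E' ⊆ E)
    (hred : ∀ C, IsF2CycleIn E C →
      ∃ C', IsF2CycleIn E' C' ∧ C'.filter (v ∈ ·) = C.filter (v ∈ ·)) :
    IsStarGenerating v E D where
  isF2CycleIn X hX := (hD.isF2CycleIn X hX).mono_s3 hE
  countP_le_two := hD.countP_le_two
  exists_mem_f2Span C hC := by
    obtain ⟨C', hC', hCC'⟩ := hred C hC
    obtain ⟨S, hS, hSC'⟩ := hD.exists_mem_f2Span C' hC'
    exact ⟨S, hS, hSC'.trans hCC'⟩

variable (v) in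
/-- The situation of `isSlide_leaf`: `Y` is the triangle on `v`, a leaf `ℓ ∈ N` of `H` and its
neighbour `p`, with `a = s(v, p)` and `b = s(v, ℓ)`. -/
structure IsSlide (E E' : Set (Sym2 W)) (Y : Finset (Sym2 W)) (a b : Sym2 W) : Prop where
  isF2CycleIn : IsF2CycleIn (insert a E) Y
  mem : a ∈ Y
  incident : v ∈ a
  notMem_of_ne : ∀ e ∈ Y, e ≠ a → e ∉ E'
  subset : E' ⊆ insert a E
  reduce : ∀ C, IsF2CycleIn E C → IsF2CycleIn E' (C ∆ if b ∈ C then Y else ∅)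

namespace IsSlide

variable {E E' : Set (Sym2 W)} {Y : Finset (Sym2 W)} {a b : Sym2 W}

theorem notMem_of_isF2CycleIn (hs : IsSlide v E E' Y a b) {X : Finset (Sym2 W)}
    (hX : IsF2CycleIn E' X) {e : Sym2 W} (he : e ∈ Y) (hea : e ≠ a) : e ∉ X :=
  fun heX => hs.notMem_of_ne e he hea (hX.1 e heX)

theorem exists_mem_f2Span {D D₀ : List (Finset (Sym2 W))} (hs : IsSlide v E E' Y a b)
    (hD : IsStarGenerating v E' D) (hspan : f2Span D ⊆ f2Span D₀) (hY : Y ∈ f2Span D₀)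
    {C : Finset (Sym2 W)} (hC : IsF2CycleIn E C) :
    ∃ S ∈ f2Span D₀, S.filter (v ∈ ·) = C.filter (v ∈ ·) := by
  obtain ⟨S, hS, hSC⟩ := hD.exists_mem_f2Span _ (hs.reduce C hC)
  refine ⟨S ∆ if b ∈ C then Y else ∅, ?_, filter_symmDiff_eq_of_filter_eq hSC⟩
  split_ifs
  exacts [symmDiff_mem_f2Span (hspan hS) hY, by simpa using hspan hS]

end IsSlide

end StarGenerating

section Slide

variable {W : Type*} [DecidableEq W] {v : W} {E E' : Set (Sym2 W)} {Y : Finset (Sym2 W)}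
  {a b : Sym2 W} {D : List (Finset (Sym2 W))}

theorem IsStarGenerating.map_of_isSlide (hD : IsStarGenerating v E' D)
    (hs : IsSlide v E E' Y a b) (haE : a ∉ E) :
    IsStarGenerating v E (D.map fun X => if a ∈ X then X ∆ Y else X) where
  isF2CycleIn := by
    simp only [List.mem_map]
    rintro _ ⟨X, hX, rfl⟩
    have hX' := (hD.isF2CycleIn X hX).mono_s3 hs.subset
    split_ifs with haX
    · exact (hX'.symmDiff hs.isF2CycleIn).of_insert (by simp [Finset.mem_symmDiff, haX, hs.mem])
    · exact hX'.of_insert haX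
  countP_le_two e := by
    rw [List.countP_map]
    by_cases heY : e ∈ Y
    · by_cases hea : e = a
      · subst hea
        refine le_of_eq_of_le (List.countP_eq_zero.2 fun X _ => ?_) (Nat.zero_le 2)
        by_cases haX : e ∈ X <;> simp [Finset.mem_symmDiff, haX, heY]
      · calc _ = D.countP (a ∈ ·) := List.countP_congr fun X hX => by
              have heX := hs.notMem_of_isF2CycleIn (hD.isF2CycleIn X hX) heY hea
              by_cases haX : a ∈ X <;> simp [Finset.mem_symmDiff, haX, heX, heY]
          _ ≤ 2 := hD.countP_le_two a
    · calc _ = D.countP (e ∈ ·) := List.countP_congr fun X _ => by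
            by_cases haX : a ∈ X <;> simp [Finset.mem_symmDiff, haX, heY]
        _ ≤ 2 := hD.countP_le_two e
  exists_mem_f2Span C hC := by
    obtain ⟨_, ⟨l, hl, rfl⟩, hlC⟩ := hD.exists_mem_f2Span _ (hs.reduce C hC)
    refine ⟨_, ⟨_, hl.map _, rfl⟩, ?_⟩
    have hparity : Odd (l.countP (a ∈ ·)) ↔ b ∈ C := by
      have haC : a ∉ C := fun h => haE (hC.1 a h)
      have ha := congrArg (a ∈ ·) hlC
      simp only [Finset.mem_filter, hs.incident, and_true, eq_iff_iff] at ha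
      rw [← mem_foldr_symmDiff_iff, ha]
      split_ifs with hbC <;> simp [Finset.mem_symmDiff, haC, hs.mem, hbC]
    rw [foldr_symmDiff_map_ite]
    simp only [hparity]
    exact filter_symmDiff_eq_of_filter_eq hlC

theorem IsSlide.isF2CycleIn_of_mem (hs : IsSlide v E E' Y a b) (haE : a ∈ E) :
    IsF2CycleIn E Y := by
  simpa [Set.insert_eq_of_mem haE] using hs.isF2CycleIn

theorem IsSlide.subset_of_mem (hs : IsSlide v E E' Y a b) (haE : a ∈ E) : E' ⊆ E := by
  simpa [Set.insert_eq_of_mem haE] using hs.subset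

theorem IsStarGenerating.cons_of_isSlide (hD : IsStarGenerating v E' D)
    (hs : IsSlide v E E' Y a b) (haE : a ∈ E) (hX : ∀ X ∈ D, a ∉ X) :
    IsStarGenerating v E (Y :: D) where
  isF2CycleIn := by
    simp only [List.mem_cons]
    rintro X (rfl | hX)
    exacts [hs.isF2CycleIn_of_mem haE, (hD.isF2CycleIn X hX).mono_s3 (hs.subset_of_mem haE)]
  countP_le_two e := by
    rw [List.countP_cons]
    by_cases heY : e ∈ Y
    · have h0 : D.countP (e ∈ ·) = 0 := List.countP_eq_zero.2 fun X hXD => by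
        by_cases hea : e = a
        · subst hea; simpa using hX X hXD
        · simpa using hs.notMem_of_isF2CycleIn (hD.isF2CycleIn X hXD) heY hea
      simp [h0, heY]
    · simpa [heY] using hD.countP_le_two e
  exists_mem_f2Span _ hC := hs.exists_mem_f2Span hD (f2Span_mono (List.sublist_cons_self Y D))
    (mem_f2Span_of_mem (by simp)) hC

/-- `Y` takes over the occurrence of `a` in `X₁`, so that `a` is still used at most twice. -/
theorem IsStarGenerating.symmDiff_cons_of_isSlide (hD : IsStarGenerating v E' D)
    (hs : IsSlide v E E' Y a b) (haE : a ∈ E) {X₁ : Finset (Sym2 W)} (hX₁ : X₁ ∈ D)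
    (haX₁ : a ∈ X₁) : IsStarGenerating v E (X₁ ∆ Y :: Y :: D.erase X₁) where
  isF2CycleIn := by
    have hDE X (hX : X ∈ D) := (hD.isF2CycleIn X hX).mono_s3 (hs.subset_of_mem haE)
    simp only [List.mem_cons]
    rintro X (rfl | rfl | hX)
    exacts [(hDE X₁ hX₁).symmDiff (hs.isF2CycleIn_of_mem haE), hs.isF2CycleIn_of_mem haE,
      hDE X (List.mem_of_mem_erase hX)]
  countP_le_two e := by
    have h := hD.countP_le_two e
    rw [(List.perm_cons_erase hX₁).countP_eq, List.countP_cons] at h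
    simp only [List.countP_cons]
    by_cases heY : e ∈ Y
    · by_cases hea : e = a
      · subst hea
        simp [Finset.mem_symmDiff, haX₁, heY] at h ⊢
        omega
      · have h0 : (D.erase X₁).countP (e ∈ ·) = 0 := List.countP_eq_zero.2 fun X hX => by
          simpa using hs.notMem_of_isF2CycleIn (hD.isF2CycleIn X (List.mem_of_mem_erase hX))
            heY hea
        simp only [h0]
        split_ifs <;> omega
    · simp [Finset.mem_symmDiff, heY] at h ⊢
      omega
  exists_mem_f2Span _ hC := by
    refine hs.exists_mem_f2Span hD (f2Span_subset_f2Span fun X hX => ?_)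
      (mem_f2Span_of_mem (by simp)) hC
    rcases List.mem_cons.1 ((List.perm_cons_erase hX₁).mem_iff.1 hX) with rfl | hX
    · simpa using symmDiff_mem_f2Span (mem_f2Span_of_mem (List.mem_cons_self ..))
        (mem_f2Span_of_mem (by simp : Y ∈ X ∆ Y :: Y :: D.erase X))
    · exact mem_f2Span_of_mem (by simp [hX])

theorem IsStarGenerating.exists_of_isSlide (hD : IsStarGenerating v E' D)
    (hs : IsSlide v E E' Y a b) (haE : a ∈ E) : ∃ D₀, IsStarGenerating v E D₀ := by
  by_cases hX : ∃ X ∈ D, a ∈ X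
  · obtain ⟨X₁, hX₁, haX₁⟩ := hX
    exact ⟨_, hD.symmDiff_cons_of_isSlide hs haE hX₁ haX₁⟩
  · push Not at hX
    exact ⟨_, hD.cons_of_isSlide hs haE hX⟩

end Slide

section Core

variable {W : Type*} [DecidableEq W] {v : W} {H : Finset (Sym2 W)} {N : Finset W} {ℓ p : W}

theorem IsF2CycleIn.mem_iff_mem_of_leaf {C : Finset (Sym2 W)}
    (hC : IsF2CycleIn (↑H ∪ starEdges v N) C) (hleaf : ∀ e ∈ H, ℓ ∈ e → e = s(ℓ, p))
    (hvℓ : v ≠ ℓ) (hvp : v ≠ p) : s(v, ℓ) ∈ C ↔ s(ℓ, p) ∈ C := by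
  refine hC.mem_iff_mem_of_forall_eq_or_eq (Sym2.mem_mk_right v ℓ) (Sym2.mem_mk_left ℓ p)
    (by simp [hvℓ, hvp]) fun e he hℓe => ?_
  rcases he with he | he
  exacts [Or.inr (hleaf e he hℓe), Or.inl (eq_of_mem_starEdges he hℓe hvℓ.symm).1]

theorem IsF2CycleIn.notMem_of_leaf {C : Finset (Sym2 W)}
    (hC : IsF2CycleIn (↑H ∪ starEdges v N) C) (hleaf : ∀ e ∈ H, ℓ ∈ e → e = s(ℓ, p))
    (hvℓ : v ≠ ℓ) (hℓ : ℓ ∉ N) : s(ℓ, p) ∉ C := by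
  refine hC.notMem_of_forall_eq (Sym2.mem_mk_left ℓ p) fun e he hℓe => ?_
  rcases he with he | he
  exacts [hleaf e he hℓe, absurd (eq_of_mem_starEdges he hℓe hvℓ.symm).2 hℓ]

theorem mem_erase_union_starEdges_insert_erase {e : Sym2 W}
    (he : e ∈ insert s(v, p) (↑H ∪ starEdges v N)) (hb : e ≠ s(v, ℓ)) (hf : e ≠ s(ℓ, p)) :
    e ∈ ↑(H.erase s(ℓ, p)) ∪ starEdges v (insert p (N.erase ℓ)) := by
  rcases he with rfl | he | ⟨u, hu, rfl⟩
  · exact Or.inr ⟨p, by simp, rfl⟩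
  · exact Or.inl (Finset.mem_erase.2 ⟨hf, he⟩)
  · have huℓ : u ≠ ℓ := by rintro rfl; exact hb rfl
    exact Or.inr ⟨u, by simp [hu, huℓ], rfl⟩

theorem isSlide_leaf (hH : ∀ e ∈ H, ¬e.IsDiag ∧ v ∉ e) (hf : s(ℓ, p) ∈ H)
    (hleaf : ∀ e ∈ H, ℓ ∈ e → e = s(ℓ, p)) (hℓ : ℓ ∈ N) :
    IsSlide v (↑H ∪ starEdges v N) (↑(H.erase s(ℓ, p)) ∪ starEdges v (insert p (N.erase ℓ)))
      {s(v, ℓ), s(v, p), s(ℓ, p)} s(v, p) s(v, ℓ) := by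
  obtain ⟨hdiag, hvf⟩ := hH _ hf
  have hℓp : ℓ ≠ p := fun h => hdiag (by simp [h])
  have hvℓ : v ≠ ℓ := fun h => hvf (by simp [h])
  have hvp : v ≠ p := fun h => hvf (by simp [h])
  have hY : IsF2CycleIn (insert s(v, p) (↑H ∪ starEdges v N)) {s(v, ℓ), s(v, p), s(ℓ, p)} := by
    refine ⟨?_, even_card_filter_mem_triangle hvℓ hvp hℓp⟩
    simp only [Finset.mem_insert, Finset.mem_singleton]
    rintro e (rfl | rfl | rfl)
    exacts [Or.inr (Or.inr ⟨ℓ, hℓ, rfl⟩), Or.inl rfl, Or.inr (Or.inl hf)]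
  refine ⟨hY, by simp, by simp, ?_, ?_, fun C hC => ?_⟩
  · simp only [Finset.mem_insert, Finset.mem_singleton]
    rintro e (rfl | rfl | rfl) hea (he | he)
    · exact (hH _ (Finset.mem_of_mem_erase he)).2 (Sym2.mem_mk_left v ℓ)
    · simpa [hℓp] using (eq_of_mem_starEdges he (Sym2.mem_mk_right v ℓ) hvℓ.symm).2
    · exact hea rfl
    · exact hea rfl
    · exact Finset.notMem_erase _ _ he
    · obtain ⟨u, -, hu⟩ := he
      exact hvf (hu ▸ Sym2.mem_mk_left v u)
  · rintro e (he | ⟨u, hu, rfl⟩)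
    · exact Or.inr (Or.inl (Finset.mem_of_mem_erase he))
    · rcases Finset.mem_insert.1 hu with rfl | hu
      exacts [Set.mem_insert _ _, Or.inr (Or.inr ⟨u, Finset.mem_of_mem_erase hu, rfl⟩)]
  · have hlink := hC.mem_iff_mem_of_leaf hleaf hvℓ hvp
    have hC' := (hC.mono_s3 (Set.subset_insert _ _)).symmDiff_ite hY (s(v, ℓ) ∈ C)
    refine ⟨fun e he => mem_erase_union_starEdges_insert_erase (hC'.1 e he) ?_ ?_, hC'.2⟩ <;>
      rintro rfl <;> by_cases hb : s(v, ℓ) ∈ C <;> simp_all [Finset.mem_symmDiff]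

theorem IsF2CycleIn.symmDiff_ite_erase {S : Set (Sym2 W)}
    {C Z : Finset (Sym2 W)} (hC : IsF2CycleIn (↑H ∪ S) C) (hZ : IsF2CycleIn H Z) {e₀ : Sym2 W}
    (he₀ : e₀ ∈ Z) : IsF2CycleIn (↑(H.erase e₀) ∪ S) (C ∆ if e₀ ∈ C then Z else ∅) :=
  (hC.symmDiff_ite (hZ.mono_s3 Set.subset_union_left) _).erase <| by
    by_cases h : e₀ ∈ C <;> simp [Finset.mem_symmDiff, h, he₀]

variable (H N) in
theorem exists_isStarGenerating (hH : ∀ e ∈ H, ¬e.IsDiag ∧ v ∉ e) (hN : v ∉ N) :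
    ∃ D, IsStarGenerating v (↑H ∪ starEdges v N) D := by
  induction H using Finset.strongInduction generalizing N with
  | H H ih =>
  rcases H.eq_empty_or_nonempty with rfl | hne
  · simpa using ⟨[], isStarGenerating_nil hN⟩
  have ih' (e : Sym2 W) (he : e ∈ H) (N' : Finset W) (hN' : v ∉ N') :
      ∃ D, IsStarGenerating v (↑(H.erase e) ∪ starEdges v N') D :=
    ih _ (Finset.erase_ssubset he) N' (fun e' he' => hH e' (Finset.mem_of_mem_erase he')) hN'
  have hsub (e : Sym2 W) : (↑(H.erase e) ∪ starEdges v N : Set (Sym2 W)) ⊆ ↑H ∪ starEdges v N :=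
    Set.union_subset_union_left _ (Finset.coe_subset.2 (Finset.erase_subset e H))
  rcases exists_leaf_or_isF2CycleIn hne fun e he => (hH e he).1 with
    ⟨ℓ, p, hf, hleaf⟩ | ⟨Z, ⟨e₀, he₀⟩, hZ⟩
  · have hvℓ : v ≠ ℓ := fun h => (hH _ hf).2 (by simp [h])
    have hvp : v ≠ p := fun h => (hH _ hf).2 (by simp [h])
    by_cases hℓ : ℓ ∈ N
    · obtain ⟨D, hD⟩ := ih' _ hf (insert p (N.erase ℓ)) (by simp [hvp, hN])
      have hs := isSlide_leaf hH hf hleaf hℓ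
      by_cases ha : s(v, p) ∈ (↑H ∪ starEdges v N : Set (Sym2 W))
      · exact hD.exists_of_isSlide hs ha
      · exact ⟨_, hD.map_of_isSlide hs ha⟩
    · obtain ⟨D, hD⟩ := ih' _ hf N hN
      exact ⟨D, hD.of_reduction (hsub _) fun C hC =>
        ⟨C, hC.erase (hC.notMem_of_leaf hleaf hvℓ hℓ), rfl⟩⟩
  · obtain ⟨D, hD⟩ := ih' e₀ (hZ.1 e₀ he₀) N hN
    refine ⟨D, hD.of_reduction (hsub _) fun C hC => ⟨_, hC.symmDiff_ite_erase hZ he₀, ?_⟩⟩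
    have hZv : Z.filter (v ∈ ·) = ∅ :=
      Finset.filter_eq_empty_iff.2 fun e he => (hH e (hZ.1 e he)).2
    split_ifs <;> simp [Finset.filter_symmDiff, hZv]

end Core

section BasisNumber

variable {W W' : Type*} [DecidableEq W] [DecidableEq W']

theorem exists_bnSet_spec [Finite W] (E : Set (Sym2 W)) :
    ∃ B : List (Finset (Sym2 W)), (∀ X ∈ B, IsF2CycleIn E X) ∧ GeneratesIn E B ∧
      ∀ e, B.countP (e ∈ ·) ≤ bnSet E := by
  let cycles := (Set.toFinite {C : Finset (Sym2 W) | IsF2CycleIn E C}).toFinset.toList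
  refine Nat.sInf_mem (s := {k | ∃ B : List (Finset (Sym2 W)), (∀ X ∈ B, IsF2CycleIn E X) ∧
    GeneratesIn E B ∧ ∀ e, B.countP (e ∈ ·) ≤ k})
    ⟨_, cycles, fun X hX => ?_, fun C hC => ⟨[C], ?_, by simp⟩, fun e => List.countP_le_length⟩
  · simpa [cycles] using hX
  · simpa [cycles] using hC

theorem isF2CycleIn_image_iff {f : W → W'} (hf : Function.Injective f) {E : Set (Sym2 W)}
    {C : Finset (Sym2 W)} :
    IsF2CycleIn (Sym2.map f '' E) (C.image (Sym2.map f)) ↔ IsF2CycleIn E C := by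
  have hmap := Sym2.map.injective hf
  have hdeg (w : W) :
      ((C.image (Sym2.map f)).filter (f w ∈ ·)).card = (C.filter (w ∈ ·)).card := by
    rw [Finset.filter_image, Finset.card_image_of_injective _ hmap]
    simp [Sym2.mem_map, hf.eq_iff]
  constructor
  · refine fun ⟨hE, hev⟩ => ⟨fun e he => ?_, fun w => hdeg w ▸ hev (f w)⟩
    obtain ⟨e', he', h⟩ := hE _ (Finset.mem_image_of_mem _ he)
    rwa [← hmap h]
  · refine fun ⟨hE, hev⟩ => ⟨?_, fun w' => ?_⟩
    · simp only [Finset.mem_image]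
      rintro _ ⟨e, he, rfl⟩
      exact Set.mem_image_of_mem _ (hE e he)
    · by_cases hw : ∃ w, f w = w'
      · obtain ⟨w, rfl⟩ := hw
        exact hdeg w ▸ hev w
      · suffices (C.image (Sym2.map f)).filter (w' ∈ ·) = ∅ by simp [this]
        refine Finset.filter_eq_empty_iff.2 fun e he hw'e => hw ?_
        obtain ⟨e, -, rfl⟩ := Finset.mem_image.1 he
        obtain ⟨w, -, hw⟩ := Sym2.mem_map.1 hw'e
        exact ⟨w, hw⟩

theorem bnSet_image_le [Finite W] {f : W → W'} (hf : Function.Injective f) (E : Set (Sym2 W)) :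
    bnSet (Sym2.map f '' E) ≤ bnSet E := by
  obtain ⟨B, hB, hgen, hcount⟩ := exists_bnSet_spec E
  have hmap := Sym2.map.injective hf
  refine Nat.sInf_le ⟨B.map (Finset.image (Sym2.map f)), ?_, fun C hC => ?_, fun e => ?_⟩
  · simp only [List.mem_map]
    rintro _ ⟨X, hX, rfl⟩
    exact (isF2CycleIn_image_iff hf).2 (hB X hX)
  · obtain ⟨C, -, rfl⟩ := Finset.subset_set_image_iff.1 hC.1
    obtain ⟨l, hl, rfl⟩ := hgen C ((isF2CycleIn_image_iff hf).1 hC)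
    exact ⟨_, hl.map _, (foldr_symmDiff_map_image hmap l).symm⟩
  · rw [List.countP_map]
    by_cases he : ∃ e', Sym2.map f e' = e
    · obtain ⟨e', rfl⟩ := he
      calc _ = B.countP (e' ∈ ·) := List.countP_congr fun X _ => by
              simp [Finset.mem_image, hmap.eq_iff]
        _ ≤ bnSet E := hcount e'
    · refine le_of_eq_of_le (List.countP_eq_zero.2 fun X _ => ?_) (Nat.zero_le _)
      simpa using fun e' _ h => he ⟨e', h⟩

theorem bnSet_le_bnSet_add_two [Finite W] {v : W} {E : Set (Sym2 W)}
    {D : List (Finset (Sym2 W))} (hD : IsStarGenerating v E D) :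
    bnSet E ≤ bnSet {e ∈ E | v ∉ e} + 2 := by
  obtain ⟨B, hB, hgen, hcount⟩ := exists_bnSet_spec {e ∈ E | v ∉ e}
  refine Nat.sInf_le ⟨B ++ D, fun X hX => ?_, fun C hC => ?_, fun e => ?_⟩
  · rcases List.mem_append.1 hX with hX | hX
    exacts [(hB X hX).mono_s3 (Set.sep_subset _ _), hD.isF2CycleIn X hX]
  · obtain ⟨S, hS, hSC⟩ := hD.exists_mem_f2Span C hC
    have hR : IsF2CycleIn {e ∈ E | v ∉ e} (S ∆ C) := by
      have hR := (isF2CycleIn_of_mem_f2Span hD.isF2CycleIn hS).symmDiff hC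
      refine ⟨fun e he => ⟨hR.1 e he, fun hv => ?_⟩, hR.2⟩
      have : e ∈ (S ∆ C).filter (v ∈ ·) := Finset.mem_filter.2 ⟨he, hv⟩
      simp [Finset.filter_symmDiff, hSC] at this
    show C ∈ f2Span (B ++ D)
    simpa using symmDiff_mem_f2Span (f2Span_mono (List.sublist_append_right B D) hS)
      (f2Span_mono (List.sublist_append_left B D) (hgen _ hR))
  · rw [List.countP_append]
    exact add_le_add (hcount e) (hD.countP_le_two e)

end BasisNumber

namespace SimpleGraph

variable {W : Type*}

theorem coe_filter_edgeFinset_union_starEdges [DecidableEq W] (G : SimpleGraph W)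
    [Fintype G.edgeSet] (v : W) [Fintype (G.neighborSet v)] :
    ↑(G.edgeFinset.filter (v ∉ ·)) ∪ starEdges v (G.neighborFinset v) = G.edgeSet := by
  ext e
  induction e using Sym2.ind with | _ a b => ?_
  simp only [Finset.coe_filter, mem_edgeFinset, Set.mem_union, mem_starEdges,
    mem_neighborFinset, mem_edgeSet]
  constructor
  · rintro (⟨h, -⟩ | ⟨u, hu, huab⟩)
    · exact h
    · rcases Sym2.eq_iff.1 huab with ⟨rfl, rfl⟩ | ⟨rfl, rfl⟩
      exacts [hu, hu.symm]
  · intro h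
    by_cases hv : v ∈ s(a, b)
    · rcases Sym2.mem_iff.1 hv with rfl | rfl
      exacts [Or.inr ⟨b, h, rfl⟩, Or.inr ⟨a, h.symm, Sym2.eq_swap⟩]
    · exact Or.inl ⟨h, hv⟩

theorem image_edgeSet_induce_compl_singleton (G : SimpleGraph W) (v : W) :
    Sym2.map Subtype.val '' (G.induce {v}ᶜ).edgeSet = {e ∈ G.edgeSet | v ∉ e} := by
  ext e
  constructor
  · rintro ⟨e', he', rfl⟩
    induction e' using Sym2.ind with | _ a b => ?_
    have ha : (a : W) ≠ v := a.2
    have hb : (b : W) ≠ v := b.2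
    exact ⟨by simpa using he', by simp [Sym2.mem_iff, ha.symm, hb.symm]⟩
  · induction e using Sym2.ind with | _ a b => ?_
    rintro ⟨h, hv⟩
    simp only [Sym2.mem_iff, not_or] at hv
    exact ⟨s(⟨a, Ne.symm hv.1⟩, ⟨b, Ne.symm hv.2⟩), h, rfl⟩

end SimpleGraph

/-- deleting a vertex decreases the basis number by at most 2:
`bn(G) ≤ bn(G - v) + 2`, where `G - v` is the induced subgraph on the complement of `v`. -/
theorem bn_le_bn_deleteVertex_add_two (G : SimpleGraph V) (v : V) :
    G.bn ≤ (G.induce ({v}ᶜ : Set V)).bn + 2 := by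
  classical
  obtain ⟨D, hD⟩ := exists_isStarGenerating (G.edgeFinset.filter (v ∉ ·)) (G.neighborFinset v)
    (fun e he => by
      rw [Finset.mem_filter, SimpleGraph.mem_edgeFinset] at he
      exact ⟨G.not_isDiag_of_mem_edgeSet he.1, he.2⟩)
    (by simp)
  rw [G.coe_filter_edgeFinset_union_starEdges] at hD
  calc G.bn ≤ bnSet {e ∈ G.edgeSet | v ∉ e} + 2 := bnSet_le_bnSet_add_two hD
    _ = bnSet (Sym2.map Subtype.val '' (G.induce {v}ᶜ).edgeSet) + 2 := by
      rw [G.image_edgeSet_induce_compl_singleton]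
    _ ≤ (G.induce {v}ᶜ).bn + 2 := by
      gcongr
      exact bnSet_image_le Subtype.val_injective _
end

section
/- Let G be a finite connected graph and let D be a dominating set of G. Then the diameter of G is at most 3|D| - 1. -/
variable {V : Type*} [Fintype V] [DecidableEq V]

private lemma dist_getVert_le {G : SimpleGraph V} (hG : G.Connected) :
    ∀ {u v : V} (p : G.Walk u v) (i : ℕ), G.dist u (p.getVert i) ≤ i := by
  intro u v p
  induction p with
  | nil => intro i; simp [SimpleGraph.Walk.getVert, SimpleGraph.dist_self]
  | @cons a b c h q ih =>
    intro i
    cases i with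
    | zero => simp [SimpleGraph.Walk.getVert]
    | succ n =>
      calc G.dist a ((SimpleGraph.Walk.cons h q).getVert (n+1))
          ≤ G.dist a b + G.dist b (q.getVert n) := hG.dist_triangle
        _ ≤ 1 + n := by
            have h1 : G.dist a b ≤ 1 := by
              simpa using SimpleGraph.dist_le h.toWalk
            exact Nat.add_le_add h1 (ih n)
        _ = n + 1 := by omega

/-- if `D` is a dominating set of a finite connected graph `G`, then the
diameter of `G` is at most `3|D| - 1`. -/
theorem diam_le_of_dominating (G : SimpleGraph V) (hG : G.Connected) (D : Finset V)
    (hD : ∀ v : V, v ∈ D ∨ ∃ u ∈ D, G.Adj u v) :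
    G.diam ≤ 3 * D.card - 1 := by
  have : Nonempty V := hG.nonempty
  obtain ⟨u, v, huv⟩ := SimpleGraph.exists_dist_eq_diam (G := G)
  obtain ⟨p, hp⟩ := hG.exists_walk_length_eq_dist u v
  set n := p.length with hn
  -- distance from u to i-th vertex is exactly i
  have hdistle : ∀ i : ℕ, G.dist u (p.getVert i) ≤ i := dist_getVert_le hG p
  have hdistge : ∀ i : ℕ, i ≤ n → G.dist (p.getVert i) v ≤ n - i := by
    intro i hi
    have := dist_getVert_le hG p.reverse (n - i)
    rw [SimpleGraph.Walk.getVert_reverse] at this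
    have h2 : p.length - (n - i) = i := by omega
    rw [h2] at this
    rw [SimpleGraph.dist_comm]
    exact this
  have hdist : ∀ i : ℕ, i ≤ n → G.dist u (p.getVert i) = i := by
    intro i hi
    have h1 := hdistle i
    have h2 := hdistge i hi
    have h3 : G.dist u v ≤ G.dist u (p.getVert i) + G.dist (p.getVert i) v := hG.dist_triangle
    omega
  -- choose dominators
  have hchoice : ∀ i : Fin (n + 1), ∃ d, d ∈ D ∧ G.dist d (p.getVert i) ≤ 1 := by
    intro i
    rcases hD (p.getVert i) with h | ⟨d, hd, hadj⟩
    · exact ⟨p.getVert i, h, by simp [SimpleGraph.dist_self]⟩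
    · exact ⟨d, hd, by simpa using SimpleGraph.dist_le hadj.toWalk⟩
  choose d hdD hd1 using hchoice
  -- injective map Fin (n+1) → D × Fin 3
  have hinj : Function.Injective (fun i : Fin (n + 1) =>
      ((⟨d i, hdD i⟩ : {x // x ∈ D}), (⟨(i : ℕ) % 3, Nat.mod_lt _ (by omega)⟩ : Fin 3))) := by
    intro i j hij
    simp only [Prod.mk.injEq, Subtype.mk.injEq, Fin.mk.injEq] at hij
    obtain ⟨hdij, hmod⟩ := hij
    have hclose : G.dist (p.getVert i) (p.getVert j) ≤ 2 := by
      calc G.dist (p.getVert i) (p.getVert j)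
          ≤ G.dist (p.getVert i) (d i) + G.dist (d i) (p.getVert j) := hG.dist_triangle
        _ ≤ 1 + 1 := by
            refine Nat.add_le_add ?_ ?_
            · rw [SimpleGraph.dist_comm]; exact hd1 i
            · rw [hdij]; exact hd1 j
        _ = 2 := rfl
    have hi : (i : ℕ) ≤ n := by omega
    have hj : (j : ℕ) ≤ n := by omega
    have t1 : G.dist u (p.getVert j) ≤ G.dist u (p.getVert i) + G.dist (p.getVert i) (p.getVert j) :=
      hG.dist_triangle
    have t2 : G.dist u (p.getVert i) ≤ G.dist u (p.getVert j) + G.dist (p.getVert j) (p.getVert i) :=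
      hG.dist_triangle
    rw [SimpleGraph.dist_comm (u := p.getVert (j : ℕ))] at t2
    rw [hdist i hi, hdist j hj] at t1 t2
    have : (i : ℕ) = (j : ℕ) := by omega
    exact Fin.ext this
  have hcard := Fintype.card_le_of_injective _ hinj
  simp only [Fintype.card_fin, Fintype.card_prod, Fintype.card_coe] at hcard
  omega
end

section
/- Let G be a connected finite graph and let H_1, ..., H_k be pairwise vertex-disjoint subgraphs of G. Then there exists a subforest T of G (a subgraph without cycles) such that the graph T ∪ H_1 ∪ ... ∪ H_k is connected and every cycle of T ∪ H_1 ∪ ... ∪ H_k is a cycle of H_1 ∪ ... ∪ H_k. -/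
/-!
Write `A` for the union of the `H i`. Among the subgraphs `F ≤ G` with `F ⊔ A` connected
(there is one, `G` itself) take a minimal one. By minimality every edge of `F` is a bridge of
`F ⊔ A`, since deleting a non-bridge keeps `F ⊔ A` connected. A bridge lies on no cycle, so a
cycle of `F ⊔ A` uses edges of `A` only, and `F` is acyclic because its edges are even bridges
of `F` itself.
-/

variable {V : Type*} [Fintype V] [DecidableEq V]

namespace SimpleGraph

section BridgeSup

variable {W : Type*} {G F A : SimpleGraph W}

theorem exists_le_connected_sup_forall_isBridge [Finite W] (hG : G.Connected) :
    ∃ F ≤ G, (F ⊔ A).Connected ∧ ∀ e ∈ F.edgeSet, (F ⊔ A).IsBridge e := by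
  obtain ⟨F, hFG, hconn, hmin⟩ := exists_minimal_le_of_wellFoundedLT
    (fun F : SimpleGraph W => (F ⊔ A).Connected) G (hG.mono le_sup_left)
  refine ⟨F, hFG, hconn, fun e he => ?_⟩
  induction e using Sym2.ind with
  | _ x y =>
    by_contra hbr
    have hdel : (F.deleteEdges {s(x, y)} ⊔ A).Connected :=
      (hconn.connected_delete_edge_of_not_isBridge hbr).mono <| by
        rw [deleteEdges_sup]
        exact sup_le_sup_left (deleteEdges_le _) _
    have hle := hmin hdel (deleteEdges_le _)
    simpa [edgeSet_deleteEdges] using edgeSet_mono hle he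

theorem isAcyclic_of_forall_isBridge_sup (hbr : ∀ e ∈ F.edgeSet, (F ⊔ A).IsBridge e) :
    F.IsAcyclic :=
  isAcyclic_iff_forall_isBridge.mpr fun e he => (hbr e he).anti le_sup_left

theorem Walk.IsCycle.mem_edgeSet_of_forall_isBridge_sup
    (hbr : ∀ e ∈ F.edgeSet, (F ⊔ A).IsBridge e) {v : W} {w : G.Walk v v} (hw : w.IsCycle)
    (hwFA : ∀ e ∈ w.edges, e ∈ (F ⊔ A).edgeSet) : ∀ e ∈ w.edges, e ∈ A.edgeSet := by
  intro e he
  rcases edgeSet_sup F A ▸ hwFA e he with heF | heA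
  · exact absurd (w.edges_transfer hwFA ▸ he)
      ((hbr e heF).notMem_edges_of_isCycle (hw.transfer hwFA))
  · exact heA

end BridgeSup

theorem Subgraph.IsSpanning.connected_iff {W : Type*} {G : SimpleGraph W} {H : G.Subgraph}
    (hH : H.IsSpanning) : H.Connected ↔ H.spanningCoe.Connected := by
  rw [Subgraph.connected_iff', (H.spanningCoeEquivCoeOfSpanning hH).connected_iff]

end SimpleGraph

open SimpleGraph

theorem exists_connecting_forest_general (G : SimpleGraph V) (hG : G.Connected)
    (k : ℕ) (H : Fin k → G.Subgraph) :
    ∃ T : G.Subgraph,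
      (∀ (v : V) (w : G.Walk v v), w.IsCycle → ¬ ∀ e ∈ w.edges, e ∈ T.edgeSet) ∧
      (T ⊔ ⨆ i, H i).Connected ∧
      (∀ (v : V) (w : G.Walk v v), w.IsCycle →
        (∀ e ∈ w.edges, e ∈ (T ⊔ ⨆ i, H i).edgeSet) →
        ∀ e ∈ w.edges, e ∈ (⨆ i, H i).edgeSet) := by
  set S := ⨆ i, H i
  obtain ⟨F, hFG, hconn, hbr⟩ := exists_le_connected_sup_forall_isBridge (A := S.spanningCoe) hG
  set T := G.toSubgraph F hFG
  have hT : T.spanningCoe = F := rfl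
  have hTS : (T ⊔ S).spanningCoe = F ⊔ S.spanningCoe := by ext; simp [T]
  refine ⟨T, fun v w hw hwT => ?_, ?_, fun v w hw hwTS => ?_⟩
  · rw [← Subgraph.edgeSet_spanningCoe, hT] at hwT
    exact isAcyclic_of_forall_isBridge_sup hbr _ (hw.transfer hwT)
  · have hspan : (T ⊔ S).IsSpanning := fun v => Or.inl (toSubgraph.isSpanning F hFG v)
    exact hspan.connected_iff.mpr (hTS ▸ hconn)
  · rw [← Subgraph.edgeSet_spanningCoe, hTS] at hwTS
    simpa only [Subgraph.edgeSet_spanningCoe] using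
      hw.mem_edgeSet_of_forall_isBridge_sup hbr hwTS

/-- connecting forest: for pairwise vertex-disjoint subgraphs
`H 1, …, H k` of a finite connected graph `G`, there is an acyclic subgraph `T` of `G`
(a subforest) such that `T ∪ H 1 ∪ ⋯ ∪ H k` is connected and every cycle of
`T ∪ H 1 ∪ ⋯ ∪ H k` is a cycle of `H 1 ∪ ⋯ ∪ H k`. -/
theorem exists_connecting_forest (G : SimpleGraph V) (hG : G.Connected)
    (k : ℕ) (H : Fin k → G.Subgraph)
    (hdisj : ∀ i j, i ≠ j → Disjoint (H i).verts (H j).verts) :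
    ∃ T : G.Subgraph,
      (∀ (v : V) (w : G.Walk v v), w.IsCycle → ¬ ∀ e ∈ w.edges, e ∈ T.edgeSet) ∧
      (T ⊔ ⨆ i, H i).Connected ∧
      (∀ (v : V) (w : G.Walk v v), w.IsCycle →
        (∀ e ∈ w.edges, e ∈ (T ⊔ ⨆ i, H i).edgeSet) →
        ∀ e ∈ w.edges, e ∈ (⨆ i, H i).edgeSet) :=
  exists_connecting_forest_general G hG k H
end

section
/- In a graph G with an F2-cycle C and a separation (X, Y) such that G[X ∩ Y] is connected, C can be written as C'_X ⊕ C'_Y where C'_X is an F2-cycle contained in G[X] and C'_Y is an F2-cycle contained in G[Y]. -/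
variable {V : Type*} [Fintype V] [DecidableEq V]

/-- An F2-cycle of `G`: a set of edges of `G` in which every vertex has even degree. -/
def SimpleGraph.IsF2Cycle (G : SimpleGraph V) (C : Finset (Sym2 V)) : Prop :=
  (∀ e ∈ C, e ∈ G.edgeSet) ∧ ∀ v : V, Even ((C.filter (fun e => v ∈ e)).card)

/-!
Let `C₁` be the edges of `C` inside `X`; by the separation, the remaining edges `C₂` lie
inside `Y`. As `C = C₁ ∆ C₂` is a cycle, `C₁` and `C₂` have the same set `D` of odd-degree
vertices, so `D ⊆ X ∩ Y`, and `|D|` is even by the handshake lemma. Pairing up the vertices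
of `D` and joining each pair by a path in the connected graph `G[X ∩ Y]` gives an edge set `F`
of `G[X ∩ Y]` whose odd-degree vertices are exactly `D`. Then `C₁ ∆ F` and `C₂ ∆ F` are the
required cycles.
-/

open Finset
open scoped symmDiff

namespace Finset

variable {β : Type*} [DecidableEq β]

theorem filter_symmDiff_s10 (s t : Finset β) (p : β → Prop) [DecidablePred p] :
    (s ∆ t).filter p = s.filter p ∆ t.filter p := by
  ext x
  simp only [mem_filter, mem_symmDiff]
  tauto

theorem odd_card_symmDiff_iff {s t : Finset β} : Odd #(s ∆ t) ↔ ¬(Odd #s ↔ Odd #t) := by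
  have hcard : #(s ∆ t) + 2 * #(s ∩ t) = #s + #t := by
    rw [symmDiff_eq_sup_sdiff_inf, sup_eq_union, inf_eq_inter,
      card_sdiff_of_subset inter_subset_union, ← card_union_add_card_inter s t]
    have := card_le_card (inter_subset_union (s := s) (t := t))
    omega
  have hodd : Odd #(s ∆ t) ↔ Odd (#s + #t) := by
    rw [← hcard]
    simp [Nat.odd_add]
  rw [hodd, Nat.odd_add, ← Nat.not_odd_iff_even]
  tauto

theorem forall_mem_symmDiff {s t : Finset β} {p : β → Prop} (hs : ∀ x ∈ s, p x)
    (ht : ∀ x ∈ t, p x) : ∀ x ∈ s ∆ t, p x :=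
  fun x hx => (mem_union.1 (symmDiff_le_sup (a := s) hx)).elim (hs x) (ht x)

end Finset

section OddVertices

variable {α : Type*} [Fintype α] [DecidableEq α]

def oddVertices (A : Finset (Sym2 α)) : Finset α :=
  {v | Odd #(A.filter (v ∈ ·))}

theorem mem_oddVertices {A : Finset (Sym2 α)} {v : α} :
    v ∈ oddVertices A ↔ Odd #(A.filter (v ∈ ·)) := by
  simp [oddVertices]

theorem oddVertices_symmDiff (A B : Finset (Sym2 α)) :
    oddVertices (A ∆ B) = oddVertices A ∆ oddVertices B := by
  ext v
  rw [mem_symmDiff, mem_oddVertices, mem_oddVertices, mem_oddVertices, filter_symmDiff_s10,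
    odd_card_symmDiff_iff]
  tauto

theorem exists_mem_of_mem_oddVertices {A : Finset (Sym2 α)} {v : α}
    (hv : v ∈ oddVertices A) : ∃ e ∈ A, v ∈ e := by
  obtain ⟨e, he⟩ := card_pos.1 (mem_oddVertices.1 hv).pos
  exact ⟨e, (mem_filter.1 he).1, (mem_filter.1 he).2⟩

theorem even_card_oddVertices {A : Finset (Sym2 α)} (hA : ∀ e ∈ A, ¬e.IsDiag) :
    Even #(oddVertices A) := by
  classical
  let H := SimpleGraph.fromEdgeSet (A : Set (Sym2 α))
  have hH : H.edgeFinset = A := by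
    ext e
    rw [SimpleGraph.mem_edgeFinset, SimpleGraph.edgeSet_fromEdgeSet]
    exact ⟨fun he => he.1, fun he => ⟨he, hA e he⟩⟩
  have hdeg : ∀ v, H.degree v = #(A.filter (v ∈ ·)) := fun v => by
    rw [← H.card_incidenceFinset_eq_degree, H.incidenceFinset_eq_filter, hH]
  convert H.even_card_odd_degree_vertices using 3
  simp [oddVertices, hdeg]

end OddVertices

namespace SimpleGraph

variable {α : Type*} {G : SimpleGraph α}

theorem forall_mem_or_forall_mem_of_separation {X Y : Set α} (hXY : X ∪ Y = Set.univ)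
    (hsep : ∀ x ∈ X \ Y, ∀ y ∈ Y \ X, ¬G.Adj x y) {e : Sym2 α} (he : e ∈ G.edgeSet) :
    (∀ v ∈ e, v ∈ X) ∨ (∀ v ∈ e, v ∈ Y) := by
  induction e with
  | h x y =>
    have hx : x ∈ X ∪ Y := hXY ▸ Set.mem_univ x
    have hy : y ∈ X ∪ Y := hXY ▸ Set.mem_univ y
    have hxy : x ∈ X → x ∉ Y → y ∈ Y → y ∉ X → False :=
      fun h₁ h₂ h₃ h₄ => hsep x ⟨h₁, h₂⟩ y ⟨h₃, h₄⟩ he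
    have hyx : y ∈ X → y ∉ Y → x ∈ Y → x ∉ X → False :=
      fun h₁ h₂ h₃ h₄ => hsep y ⟨h₁, h₂⟩ x ⟨h₃, h₄⟩ (G.adj_symm he)
    simp only [Sym2.mem_iff, forall_eq_or_imp, forall_eq]
    rw [Set.mem_union] at hx hy
    tauto

theorem exists_isPath_of_connected_induce {S : Set α} (hS : (G.induce S).Connected) {a b : α}
    (ha : a ∈ S) (hb : b ∈ S) : ∃ p : G.Walk a b, p.IsPath ∧ ∀ e ∈ p.edges, ∀ v ∈ e, v ∈ S := by
  classical
  obtain ⟨q⟩ := hS.preconnected ⟨a, ha⟩ ⟨b, hb⟩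
  let p : G.Walk a b := q.toPath.1.map (Embedding.induce S).toHom
  have hedges : p.edges = q.toPath.1.edges.map (Sym2.map Subtype.val) := Walk.edges_map _ _
  refine ⟨p, q.toPath.2.map (Embedding.induce (G := G) S).injective, fun e he v hv => ?_⟩
  obtain ⟨e', -, rfl⟩ := List.mem_map.1 (hedges ▸ he)
  obtain ⟨w, -, rfl⟩ := Sym2.mem_map.1 hv
  exact w.2

variable [Fintype α] [DecidableEq α]

theorem isF2Cycle_iff {C : Finset (Sym2 α)} :
    G.IsF2Cycle C ↔ (∀ e ∈ C, e ∈ G.edgeSet) ∧ oddVertices C = ∅ := by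
  simp [IsF2Cycle, eq_empty_iff_forall_notMem, mem_oddVertices]

theorem isF2Cycle_symmDiff {A B : Finset (Sym2 α)} (hA : ∀ e ∈ A, e ∈ G.edgeSet)
    (hB : ∀ e ∈ B, e ∈ G.edgeSet) (h : oddVertices A = oddVertices B) :
    G.IsF2Cycle (A ∆ B) :=
  isF2Cycle_iff.2
    ⟨forall_mem_symmDiff hA hB, by rw [oddVertices_symmDiff, h, symmDiff_self]; rfl⟩

theorem Walk.IsTrail.oddVertices_edgesFinset {a b : α} {p : G.Walk a b} (hp : p.IsTrail)
    (hab : a ≠ b) : oddVertices hp.edgesFinset = {a, b} := by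
  ext x
  have hcount : #(hp.edgesFinset.filter (x ∈ ·)) = p.edges.countP (x ∈ ·) := by
    change Multiset.card (Multiset.filter _ (p.edges : Multiset (Sym2 α))) = _
    rw [Multiset.filter_coe, Multiset.coe_card, List.countP_eq_length_filter]
  rw [mem_oddVertices, ← Nat.not_even_iff_odd, hcount, hp.even_countP_edges_iff]
  simp only [ne_eq, hab, not_false_eq_true, forall_const, mem_insert, mem_singleton]
  tauto

theorem exists_oddVertices_eq_of_connected_induce {S : Set α} (hS : (G.induce S).Connected)
    {D : Finset α} (hDS : ↑D ⊆ S) (hD : Even #D) :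
    ∃ F : Finset (Sym2 α),
      (∀ e ∈ F, e ∈ G.edgeSet) ∧ (∀ e ∈ F, ∀ v ∈ e, v ∈ S) ∧ oddVertices F = D := by
  induction D using Finset.strongInduction with
  | H D ih =>
    obtain rfl | ⟨a, ha⟩ := D.eq_empty_or_nonempty
    · exact ⟨∅, by simp, by simp, by simp [oddVertices]⟩
    have htwo : 2 ≤ #D := by
      obtain ⟨k, hk⟩ := hD
      have := card_pos.2 ⟨a, ha⟩
      omega
    obtain ⟨b, hb, hba⟩ := D.exists_mem_ne htwo a
    have hab : {a, b} ⊆ D := insert_subset ha (singleton_subset_iff.2 hb)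
    obtain ⟨F, hFG, hFS, hFD⟩ := ih (D \ {a, b}) (sdiff_ssubset hab (insert_nonempty _ _))
      ((coe_subset.2 sdiff_subset).trans hDS)
      (by rw [card_sdiff_of_subset hab, card_pair hba.symm, Nat.even_sub htwo]; simp [hD])
    obtain ⟨p, hp, hpS⟩ := exists_isPath_of_connected_induce hS (hDS ha) (hDS hb)
    refine ⟨F ∆ hp.isTrail.edgesFinset, forall_mem_symmDiff hFG
      (fun e he => p.edges_subset_edgeSet he),
      forall_mem_symmDiff hFS (fun e he => hpS e he), ?_⟩
    rw [oddVertices_symmDiff, hFD, hp.isTrail.oddVertices_edgesFinset hba.symm,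
      ← symmDiff_of_ge hab, symmDiff_symmDiff_cancel_right]

end SimpleGraph

open SimpleGraph

/-- given a separation `(X, Y)` of `G` with `G[X ∩ Y]` connected, every
F2-cycle `C` of `G` can be written as `C'_X ⊕ C'_Y` with `C'_X` an F2-cycle contained in
`G[X]` and `C'_Y` an F2-cycle contained in `G[Y]`. -/
theorem f2Cycle_split_along_connected_separator (G : SimpleGraph V) (X Y : Set V)
    (hXY : X ∪ Y = Set.univ) (hsep : ∀ x ∈ X \ Y, ∀ y ∈ Y \ X, ¬ G.Adj x y)
    (hconn : (G.induce (X ∩ Y)).Connected)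
    (C : Finset (Sym2 V)) (hC : G.IsF2Cycle C) :
    ∃ CX CY : Finset (Sym2 V),
      G.IsF2Cycle CX ∧ G.IsF2Cycle CY ∧
      (∀ e ∈ CX, ∀ v ∈ e, v ∈ X) ∧ (∀ e ∈ CY, ∀ v ∈ e, v ∈ Y) ∧
      C = symmDiff CX CY := by
  classical
  obtain ⟨hCG, hCodd⟩ := isF2Cycle_iff.1 hC
  set C₁ := C.filter fun e => ∀ v ∈ e, v ∈ X
  set C₂ := C.filter fun e => ¬∀ v ∈ e, v ∈ X
  have hC₁G : ∀ e ∈ C₁, e ∈ G.edgeSet := fun e he => hCG e (filter_subset _ _ he)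
  have hC₂G : ∀ e ∈ C₂, e ∈ G.edgeSet := fun e he => hCG e (filter_subset _ _ he)
  have hC₁X : ∀ e ∈ C₁, ∀ v ∈ e, v ∈ X := fun e he => (mem_filter.1 he).2
  have hC₂Y : ∀ e ∈ C₂, ∀ v ∈ e, v ∈ Y := fun e he =>
    (forall_mem_or_forall_mem_of_separation hXY hsep (hC₂G e he)).resolve_left
      (mem_filter.1 he).2
  have hC : C = C₁ ∆ C₂ := by
    rw [(disjoint_filter_filter_not C C _).symmDiff_eq_sup, sup_eq_union,
      filter_union_filter_not_eq]
  have hodd : oddVertices C₁ = oddVertices C₂ :=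
    symmDiff_eq_bot.1 (by rw [← oddVertices_symmDiff, ← hC, hCodd]; rfl)
  have hD : ↑(oddVertices C₁) ⊆ X ∩ Y := fun v hv => by
    obtain ⟨e, he, hve⟩ := exists_mem_of_mem_oddVertices hv
    obtain ⟨f, hf, hvf⟩ := exists_mem_of_mem_oddVertices (hodd ▸ hv)
    exact ⟨hC₁X e he v hve, hC₂Y f hf v hvf⟩
  obtain ⟨F, hFG, hFS, hFD⟩ := exists_oddVertices_eq_of_connected_induce hconn hD
    (even_card_oddVertices fun e he => G.not_isDiag_of_mem_edgeSet (hC₁G e he))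
  refine ⟨C₁ ∆ F, C₂ ∆ F, isF2Cycle_symmDiff hC₁G hFG hFD.symm,
    isF2Cycle_symmDiff hC₂G hFG (hodd ▸ hFD.symm),
    forall_mem_symmDiff hC₁X fun e he v hv => (hFS e he v hv).1,
    forall_mem_symmDiff hC₂Y fun e he v hv => (hFS e he v hv).2, ?_⟩
  rw [symmDiff_symmDiff_symmDiff_comm, symmDiff_self, symmDiff_bot, hC]
end

section
/- In a network (connected hypergraph with source s and sink t), there is a linear ordering e_1, ..., e_p of the cutedges such that every s–t path traverses the cutedges in exactly this order. -/
/-! If a cutedge `e` came before a hyperedge `f` on one `s`–`t` path but after it on another,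
then the second path up to `f`, followed by `f` and the first path after `f`, would be an
`s`–`t` walk avoiding `e`; shortening it to a path contradicts `e` being a cutedge. So any two
paths list the cutedges in the same relative order, and that order can be read off any path. -/

/-- A path in a hypergraph with vertex type `α` and hyperedges `E : ι → Set α`
(hyperedges are indexed, so multiplicities are allowed): an alternating sequence of
pairwise distinct vertices and pairwise distinct hyperedges, from `s` to `t`, each
consecutive pair of vertices lying in the connecting hyperedge. -/
structure HPath {α ι : Type*} (E : ι → Set α) (s t : α) where
  verts : List α
  edges : List ι
  nodup_verts : verts.Nodup
  nodup_edges : edges.Nodup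
  len : verts.length = edges.length + 1
  head : verts.head? = some s
  last : verts.getLast? = some t
  mem_left : ∀ i : Fin edges.length,
    verts.get ⟨i.1, by omega⟩ ∈ E (edges.get i)
  mem_right : ∀ i : Fin edges.length,
    verts.get ⟨i.1 + 1, by omega⟩ ∈ E (edges.get i)

/-- The hypergraph is connected: any two vertices are joined by a path. -/
def HConnected {α ι : Type*} (E : ι → Set α) : Prop :=
  ∀ x y : α, Nonempty (HPath E x y)

/-- A cutedge of the network `(E, s, t)`: a hyperedge lying on every `s`–`t` path. -/
def IsCutedge {α ι : Type*} (E : ι → Set α) (s t : α) (e : ι) : Prop :=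
  ∀ p : HPath E s t, e ∈ p.edges

open List

theorem List.Nodup.not_pair_sublist_swap {β : Type*} {l : List β} {a b : β} (hl : l.Nodup)
    (hab : [a, b] <+ l) : ¬ [b, a] <+ l := by
  induction l with
  | nil => simp at hab
  | cons c l ih =>
    rw [nodup_cons] at hl
    rw [sublist_cons_iff] at hab ⊢
    grind

theorem List.pair_sublist_append_cons_of_mem_left {β : Type*} {l₁ l₂ : List β} {a b : β}
    (ha : a ∈ l₁) : [a, b] <+ l₁ ++ b :: l₂ :=
  (singleton_sublist.2 ha).append (singleton_sublist.2 mem_cons_self)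

theorem List.pair_sublist_append_cons_of_mem_right {β : Type*} {l₁ l₂ : List β} {a b : β}
    (ha : a ∈ l₂) : [b, a] <+ l₁ ++ b :: l₂ :=
  ((singleton_sublist.2 ha).cons_cons b).trans (sublist_append_right _ _)

inductive HWalk {α ι : Type*} (E : ι → Set α) : α → α → Type _
  | nil (a : α) : HWalk E a a
  | cons {b c : α} (a : α) (e : ι) (ha : a ∈ E e) (hb : b ∈ E e) (w : HWalk E b c) :
      HWalk E a c

namespace HWalk

variable {α ι : Type*} {E : ι → Set α} {a b c : α}

@[simp] def support : {a b : α} → HWalk E a b → List α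
  | _, _, nil a => [a]
  | _, _, cons a _ _ _ w => a :: w.support

@[simp] def edges : {a b : α} → HWalk E a b → List ι
  | _, _, nil _ => []
  | _, _, cons _ e _ _ w => e :: w.edges

@[simp] def append : {a b c : α} → HWalk E a b → HWalk E b c → HWalk E a c
  | _, _, _, nil _, w' => w'
  | _, _, _, cons a e ha hb w, w' => cons a e ha hb (w.append w')

lemma support_ne_nil (w : HWalk E a b) : w.support ≠ [] := by
  cases w <;> simp

@[simp] lemma edges_append (w₁ : HWalk E a b) (w₂ : HWalk E b c) :
    (w₁.append w₂).edges = w₁.edges ++ w₂.edges := by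
  induction w₁ <;> simp [*]

lemma support_append (w₁ : HWalk E a b) (w₂ : HWalk E b c) :
    (w₁.append w₂).support = w₁.support.dropLast ++ w₂.support := by
  induction w₁ with
  | nil => simp
  | cons a e ha hb w ih => simp [ih, dropLast_cons_of_ne_nil w.support_ne_nil]

lemma exists_eq_append_of_mem_support {x : α} (w : HWalk E a b) (hx : x ∈ w.support) :
    ∃ (w₁ : HWalk E a x) (w₂ : HWalk E x b), w = w₁.append w₂ := by
  induction w with
  | nil a =>
    obtain rfl : x = a := by simpa using hx
    exact ⟨nil x, nil x, rfl⟩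
  | cons a e ha hb w ih =>
    by_cases hxa : x = a
    · subst hxa
      exact ⟨nil x, _, rfl⟩
    · obtain ⟨w₁, w₂, rfl⟩ := ih (by simpa [hxa] using hx)
      exact ⟨cons a e ha hb w₁, w₂, rfl⟩

lemma exists_eq_append_cons_of_mem_edges {f : ι} (w : HWalk E a b) (hf : f ∈ w.edges) :
    ∃ (u v : α) (hu : u ∈ E f) (hv : v ∈ E f) (w₁ : HWalk E a u) (w₂ : HWalk E v b),
      w = w₁.append (cons u f hu hv w₂) := by
  induction w with
  | nil a => simp at hf
  | cons a e ha hb w ih =>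
    by_cases hfe : f = e
    · subst hfe
      exact ⟨a, _, ha, hb, nil a, w, rfl⟩
    · obtain ⟨u, v, hu, hv, w₁, w₂, rfl⟩ := ih (by simpa [hfe] using hf)
      exact ⟨u, v, hu, hv, cons a e ha hb w₁, w₂, rfl⟩

lemma exists_nodup_support_nodup_edges (w : HWalk E a b) :
    ∃ w' : HWalk E a b, w'.support.Nodup ∧ w'.edges.Nodup ∧ w'.edges ⊆ w.edges := by
  induction w with
  | nil a => exact ⟨nil a, by simp⟩
  | cons a e ha hb w ih =>
    obtain ⟨w', hsupp, hedges, hsub⟩ := ih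
    by_cases ha' : a ∈ w'.support
    · obtain ⟨w₁, w₂, rfl⟩ := w'.exists_eq_append_of_mem_support ha'
      rw [support_append] at hsupp
      rw [edges_append] at hedges hsub
      exact ⟨w₂, hsupp.of_append_right, hedges.of_append_right,
        fun x hx => mem_cons_of_mem e (hsub (mem_append_right _ hx))⟩
    by_cases he : e ∈ w'.edges
    · obtain ⟨u, v, hu, hv, w₁, w₂, rfl⟩ := w'.exists_eq_append_cons_of_mem_edges he
      rw [support_append] at hsupp ha'
      rw [edges_append] at hedges hsub
      refine ⟨cons a e ha hv w₂, ?_, hedges.of_append_right, ?_⟩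
      · simp only [support, mem_append, not_or] at ha' hsupp ⊢
        exact nodup_cons.2 ⟨ha'.2 ∘ mem_cons_of_mem u, (hsupp.of_append_right).of_cons⟩
      · simp only [edges] at hsub ⊢
        exact cons_subset_cons e fun x hx => hsub (mem_append_right _ (mem_cons_of_mem e hx))
    · exact ⟨cons a e ha hb w', by simp [ha', hsupp], by simp [he, hedges],
        cons_subset_cons e hsub⟩

lemma length_support (w : HWalk E a b) : w.support.length = w.edges.length + 1 := by
  induction w <;> simp [*]

lemma head?_support (w : HWalk E a b) : w.support.head? = some a := by
  cases w <;> rfl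

lemma getLast?_support (w : HWalk E a b) : w.support.getLast? = some b := by
  induction w with
  | nil => rfl
  | cons a e ha hb w ih => simp [getLast?_cons, ih]

lemma getElem_support_mem (w : HWalk E a b) (i : ℕ) (hi : i < w.edges.length) :
    w.support[i]'(by rw [length_support]; omega) ∈ E w.edges[i] := by
  induction w generalizing i with
  | nil => simp at hi
  | cons a e ha hb w ih =>
    cases i with
    | zero => exact ha
    | succ i => exact ih i (by simpa using hi)

lemma getElem_succ_support_mem (w : HWalk E a b) (i : ℕ) (hi : i < w.edges.length) :
    w.support[i + 1]'(by rw [length_support]; omega) ∈ E w.edges[i] := by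
  induction w generalizing i with
  | nil => simp at hi
  | cons a e ha hb w ih =>
    cases i with
    | zero => cases w <;> exact hb
    | succ i => exact ih i (by simpa using hi)

def toHPath (w : HWalk E a b) (hsupp : w.support.Nodup) (hedges : w.edges.Nodup) :
    HPath E a b where
  verts := w.support
  edges := w.edges
  nodup_verts := hsupp
  nodup_edges := hedges
  len := w.length_support
  head := w.head?_support
  last := w.getLast?_support
  mem_left i := w.getElem_support_mem i i.2
  mem_right i := w.getElem_succ_support_mem i i.2

lemma exists_hPath_edges_subset (w : HWalk E a b) : ∃ p : HPath E a b, p.edges ⊆ w.edges :=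
  let ⟨w', hsupp, hedges, hsub⟩ := w.exists_nodup_support_nodup_edges
  ⟨w'.toHPath hsupp hedges, hsub⟩

lemma exists_edges_eq_of_lists :
    ∀ (es : List ι) (vs : List α) {a b : α} (hlen : vs.length = es.length + 1),
      vs.head? = some a → vs.getLast? = some b →
      (∀ i (hi : i < es.length), vs[i] ∈ E es[i]) →
      (∀ i (hi : i < es.length), vs[i + 1] ∈ E es[i]) →
      ∃ w : HWalk E a b, w.edges = es
  | [], [x], _, _, _, hhead, hlast, _, _ => by
    obtain rfl : x = _ := by simpa using hhead
    obtain rfl : x = _ := by simpa using hlast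
    exact ⟨nil x, rfl⟩
  | e :: es, x :: y :: vs, _, _, hlen, hhead, hlast, hleft, hright => by
    obtain rfl : x = _ := by simpa using hhead
    obtain ⟨w, hw⟩ := exists_edges_eq_of_lists es (y :: vs) (by simpa using hlen) rfl
      (by simpa using hlast) (fun i hi => hleft (i + 1) (by simpa))
      (fun i hi => hright (i + 1) (by simpa))
    exact ⟨cons x e (hleft 0 (by simp)) (hright 0 (by simp)) w, by simp [hw]⟩

lemma _root_.HPath.exists_hWalk_edges_eq (p : HPath E a b) :
    ∃ w : HWalk E a b, w.edges = p.edges :=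
  exists_edges_eq_of_lists p.edges p.verts p.len p.head p.last
    (fun i hi => p.mem_left ⟨i, hi⟩) (fun i hi => p.mem_right ⟨i, hi⟩)

end HWalk

section Network

variable {α ι : Type*} {E : ι → Set α} {s t : α}

theorem IsCutedge.pair_sublist_of_mem {e f : ι} (he : IsCutedge E s t e) {p q : HPath E s t}
    (hp : [e, f] <+ p.edges) (hf : f ∈ q.edges) : [e, f] <+ q.edges := by
  obtain ⟨wp, hwp⟩ := p.exists_hWalk_edges_eq
  obtain ⟨wq, hwq⟩ := q.exists_hWalk_edges_eq
  obtain ⟨_, v, _, hv, p₁, p₂, rfl⟩ :=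
    wp.exists_eq_append_cons_of_mem_edges (hwp ▸ hp.subset (by simp : f ∈ [e, f]))
  obtain ⟨u, _, hu, _, q₁, q₂, rfl⟩ := wq.exists_eq_append_cons_of_mem_edges (hwq ▸ hf)
  simp only [HWalk.edges_append, HWalk.edges] at hwp hwq
  by_contra hq
  have hne : e ≠ f := by simpa using hp.nodup p.nodup_edges
  have he₁ : e ∉ q₁.edges := fun h => hq (hwq ▸ pair_sublist_append_cons_of_mem_left h)
  have he₂ : e ∉ p₂.edges := fun h =>
    p.nodup_edges.not_pair_sublist_swap hp (hwp ▸ pair_sublist_append_cons_of_mem_right h)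
  -- glue the part of `q` before `f` to the part of `p` after `f`
  obtain ⟨r, hr⟩ := (q₁.append (.cons u f hu hv p₂)).exists_hPath_edges_subset
  simpa [he₁, hne, he₂] using hr (he r)

theorem filter_isCutedge_edges_eq [DecidablePred (IsCutedge E s t)] (p q : HPath E s t) :
    p.edges.filter (IsCutedge E s t ·) = q.edges.filter (IsCutedge E s t ·) := by
  have mem_filter_iff (r : HPath E s t) (e : ι) :
      e ∈ r.edges.filter (IsCutedge E s t ·) ↔ IsCutedge E s t e := by
    simpa using fun he => he r
  refine Perm.eq_of_pairwise (le := fun e f => [e, f] <+ q.edges) ?_ ?_ ?_ ?_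
  · exact fun e f _ _ hef hfe => (q.nodup_edges.not_pair_sublist_swap hef hfe).elim
  · refine pairwise_iff_forall_sublist.2 fun {e f} hef => ?_
    have he := (mem_filter_iff p e).1 (hef.subset (by simp))
    have hf := (mem_filter_iff p f).1 (hef.subset (by simp))
    exact he.pair_sublist_of_mem (hef.trans filter_sublist) (hf q)
  · exact pairwise_iff_forall_sublist.2 fun hef => hef.trans filter_sublist
  · refine (perm_ext_iff_of_nodup (p.nodup_edges.filter _) (q.nodup_edges.filter _)).2 ?_
    simp only [mem_filter_iff, implies_true]

end Network

theorem exists_cutedge_order_general {α ι : Type*} [DecidableEq ι]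
    (E : ι → Set α) (s t : α) (hconn : HConnected E) :
    ∃ l : List ι, l.Nodup ∧ (∀ e : ι, e ∈ l ↔ IsCutedge E s t e) ∧
      ∀ p : HPath E s t, p.edges.filter (fun e => decide (e ∈ l)) = l := by
  classical
  obtain ⟨p₀⟩ := hconn s t
  have mem_filter_iff (e : ι) :
      e ∈ p₀.edges.filter (IsCutedge E s t ·) ↔ IsCutedge E s t e := by
    simpa using fun he => he p₀
  refine ⟨_, p₀.nodup_edges.filter _, mem_filter_iff, fun p => ?_⟩
  simp only [mem_filter_iff]
  exact filter_isCutedge_edges_eq p p₀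

/-- in a finite connected network with source `s` and sink `t`, there is a
linear ordering `l` of the cutedges such that every `s`–`t` path traverses the cutedges
in exactly this order. -/
theorem exists_cutedge_order {α ι : Type*} [Fintype α] [Fintype ι] [DecidableEq ι]
    (E : ι → Set α) (s t : α) (hst : s ≠ t) (hconn : HConnected E) :
    ∃ l : List ι, l.Nodup ∧ (∀ e : ι, e ∈ l ↔ IsCutedge E s t e) ∧
      ∀ p : HPath E s t, p.edges.filter (fun e => decide (e ∈ l)) = l :=
  exists_cutedge_order_general E s t hconn
end
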